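/- arXiv:2510.18708 — 8 statements merged into one kernel-verified Lean document; each statement's English description precedes it below -/
import Mathlib

section
/- In a flow network with all capacities integral, if a fractional vector x = (x_k)_{k∈D} of flows into the sinks is achievable by some feasible flow, then there exists an integral feasible flow f such that f(d_k) ∈ {⌊x_k⌋, ⌈x_k⌉} for every sink d_k, and for each block D_j of a given partition of the sinks, Σ_{k∈D_j} f(d_k) = Σ_{k∈D_j} x_k, provided each block sum Σ_{k∈D_j} x_k is an integer. -/
open Finset

/-- A single-source flow network with nonnegative integer capacities on edges
(`cap u v = 0` meaning no edge) and on sink nodes. -/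
structure FlowNetwork (V : Type*) [Fintype V] [DecidableEq V] where
  source : V
  sinks : Finset V
  source_not_sink : source ∉ sinks
  cap : V → V → ℕ
  sinkCap : V → ℕ

/-- Total flow into a node. -/
def inflow {V : Type*} [Fintype V] (f : V → V → ℝ) (v : V) : ℝ := ∑ u, f u v

/-- Total flow out of a node. -/
def outflow {V : Type*} [Fintype V] (f : V → V → ℝ) (v : V) : ℝ := ∑ u, f v u

/-- A feasible flow. -/
def IsFlow {V : Type*} [Fintype V] [DecidableEq V]
    (N : FlowNetwork V) (f : V → V → ℝ) : Prop :=
  (∀ u v, 0 ≤ f u v) ∧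
  (∀ u v, f u v ≤ (N.cap u v : ℝ)) ∧
  (∀ v, v ≠ N.source → v ∉ N.sinks → inflow f v = outflow f v) ∧
  (∀ d ∈ N.sinks, ∀ u, f d u = 0) ∧
  (∀ d ∈ N.sinks, inflow f d ≤ (N.sinkCap d : ℝ))

set_option linter.unusedSectionVars false
set_option linter.unusedVariables false
set_option linter.unreachableTactic false
set_option linter.unusedTactic false
set_option maxHeartbeats 1000000

namespace IntRound



def IsInt (x : ℝ) : Prop := ∃ n : ℤ, x = n

lemma IsInt.add {x y : ℝ} (hx : IsInt x) (hy : IsInt y) : IsInt (x + y) := by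
  obtain ⟨n, rfl⟩ := hx; obtain ⟨m, rfl⟩ := hy; exact ⟨n + m, by push_cast; ring⟩

lemma IsInt.sub {x y : ℝ} (hx : IsInt x) (hy : IsInt y) : IsInt (x - y) := by
  obtain ⟨n, rfl⟩ := hx; obtain ⟨m, rfl⟩ := hy; exact ⟨n - m, by push_cast; ring⟩

lemma isInt_sum {α : Type*} {s : Finset α} {f : α → ℝ} (h : ∀ a ∈ s, IsInt (f a)) :
    IsInt (∑ a ∈ s, f a) := by
  classical
  induction s using Finset.induction_on with
  | empty => exact ⟨0, by simp⟩
  | insert _ _ hnot ih =>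
    rw [Finset.sum_insert hnot]
    exact (h _ (Finset.mem_insert_self _ _)).add (ih fun a ha => h a (Finset.mem_insert_of_mem ha))

lemma floor_lt_of_not_isInt {x : ℝ} (h : ¬ IsInt x) : (⌊x⌋ : ℝ) < x :=
  lt_of_le_of_ne (Int.floor_le x) fun he => h ⟨⌊x⌋, he.symm⟩

lemma lt_ceil_of_not_isInt {x : ℝ} (h : ¬ IsInt x) : x < (⌈x⌉ : ℝ) :=
  lt_of_le_of_ne (Int.le_ceil x) fun he => h ⟨⌈x⌉, he⟩


variable {W : Type*} [Fintype W] [DecidableEq W]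

/-- An entry at vertex `w`: `(v, true)` is the incoming edge `(v, w)`,
`(v, false)` is the outgoing edge `(w, v)`. -/
def entryEdge (w : W) (p : W × Bool) : W × W := if p.2 then (p.1, w) else (w, p.1)

def eVal (g : W → W → ℝ) (w : W) (p : W × Bool) : ℝ :=
  g (entryEdge w p).1 (entryEdge w p).2

lemma entryEdge_flip (w v : W) (b : Bool) : entryEdge v (w, !b) = entryEdge w (v, b) := by
  cases b <;> simp [entryEdge]

lemma degree (g : W → W → ℝ) (hcons : ∀ w, ∑ u, g u w = ∑ u, g w u)
    (w : W) (p : W × Bool) (hp : ¬ IsInt (eVal g w p)) :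
    ∃ q, q ≠ p ∧ ¬ IsInt (eVal g w q) := by
  by_contra hc
  push_neg at hc
  apply hp
  obtain ⟨a, b⟩ := p
  cases b with
  | true =>
    -- eVal = g a w
    have h1 : ∀ v, IsInt (g w v) := fun v => hc (v, false) (by simp)
    have h2 : ∀ v, v ≠ a → IsInt (g v w) := fun v hv =>
      hc (v, true) (by simp [Prod.ext_iff, hv])
    have key : g a w = (∑ u, g w u) - ∑ v ∈ Finset.univ.erase a, g v w := by
      have := hcons w
      rw [← Finset.add_sum_erase Finset.univ (fun v => g v w) (Finset.mem_univ a)] at this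
      linarith
    have : IsInt (eVal g w (a, true)) := by
      show IsInt (g (entryEdge w (a,true)).1 (entryEdge w (a,true)).2)
      simp only [entryEdge, if_pos]
      rw [show g a w = _ from key]
      exact (isInt_sum fun v _ => h1 v).sub
        (isInt_sum fun v hv => h2 v (Finset.ne_of_mem_erase hv))
    exact this
  | false =>
    have h1 : ∀ v, IsInt (g v w) := fun v => hc (v, true) (by simp)
    have h2 : ∀ v, v ≠ a → IsInt (g w v) := fun v hv =>
      hc (v, false) (by simp [Prod.ext_iff, hv])
    have key : g w a = (∑ u, g u w) - ∑ v ∈ Finset.univ.erase a, g w v := by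
      have := hcons w
      rw [← Finset.add_sum_erase Finset.univ (fun v => g w v) (Finset.mem_univ a)] at this
      linarith
    have : IsInt (eVal g w (a, false)) := by
      show IsInt (g (entryEdge w (a,false)).1 (entryEdge w (a,false)).2)
      simp only [entryEdge, if_neg Bool.false_ne_true]
      rw [show g w a = _ from key]
      exact (isInt_sum fun v _ => h1 v).sub
        (isInt_sum fun v hv => h2 v (Finset.ne_of_mem_erase hv))
    exact this











variable (g : W → W → ℝ) (hcons : ∀ w, ∑ u, g u w = ∑ u, g w u)

/-- State of the walk: (current vertex, entry by which we arrived), fractional. -/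
def FracSt := {st : W × (W × Bool) // ¬ IsInt (eVal g st.1 st.2)}

noncomputable def nextq (st : FracSt g) : W × Bool :=
  Classical.choose (degree g hcons st.1.1 st.1.2 st.2)

lemma nextq_ne (st : FracSt g) : nextq g hcons st ≠ st.1.2 :=
  (Classical.choose_spec (degree g hcons st.1.1 st.1.2 st.2)).1

lemma nextq_frac (st : FracSt g) : ¬ IsInt (eVal g st.1.1 (nextq g hcons st)) :=
  (Classical.choose_spec (degree g hcons st.1.1 st.1.2 st.2)).2

noncomputable def stepSt (st : FracSt g) : FracSt g :=
  ⟨((nextq g hcons st).1, (st.1.1, !(nextq g hcons st).2)), by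
    show ¬ IsInt (eVal g _ _)
    unfold eVal
    rw [entryEdge_flip]
    exact nextq_frac g hcons st⟩

noncomputable def walk (st0 : FracSt g) : ℕ → FracSt g :=
  fun n => Nat.rec st0 (fun _ st => stepSt g hcons st) n

variable (st0 : FracSt g)

/-- vertex at step n -/
noncomputable def wv (n : ℕ) : W := (walk g hcons st0 n).1.1
/-- arrival entry at step n -/
noncomputable def pa (n : ℕ) : W × Bool := (walk g hcons st0 n).1.2
/-- chosen exit entry at step n -/
noncomputable def qe (n : ℕ) : W × Bool := nextq g hcons (walk g hcons st0 n)
/-- the directed edge used by step n -/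
noncomputable def Ee (n : ℕ) : W × W := entryEdge (wv g hcons st0 n) (qe g hcons st0 n)

lemma wv_succ (n : ℕ) : wv g hcons st0 (n+1) = (qe g hcons st0 n).1 := rfl
lemma pa_succ (n : ℕ) : pa g hcons st0 (n+1) = (wv g hcons st0 n, !(qe g hcons st0 n).2) := rfl

lemma Ee_eq_entry_succ (n : ℕ) :
    Ee g hcons st0 n = entryEdge (wv g hcons st0 (n+1)) (pa g hcons st0 (n+1)) := by
  rw [pa_succ, wv_succ, entryEdge_flip]
  rfl

lemma Ee_frac (n : ℕ) : ¬ IsInt (g (Ee g hcons st0 n).1 (Ee g hcons st0 n).2) :=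
  nextq_frac g hcons (walk g hcons st0 n)

/-- entryEdge is injective in the entry, on non-loop edges -/
lemma entryEdge_inj {w : W} {p p' : W × Bool} (h : entryEdge w p = entryEdge w p')
    (hl : (entryEdge w p).1 ≠ (entryEdge w p).2) : p = p' := by
  obtain ⟨v, b⟩ := p; obtain ⟨v', b'⟩ := p'
  cases b <;> cases b' <;> simp_all [entryEdge, Prod.ext_iff] <;> tauto

/-- consecutive steps use distinct edges -/
lemma Ee_succ_ne (hnl : ∀ v : W, IsInt (g v v)) (n : ℕ) :
    Ee g hcons st0 n ≠ Ee g hcons st0 (n+1) := by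
  intro he
  have h1 : Ee g hcons st0 (n+1) = entryEdge (wv g hcons st0 (n+1)) (qe g hcons st0 (n+1)) := rfl
  rw [Ee_eq_entry_succ] at he
  have hloop : (entryEdge (wv g hcons st0 (n+1)) (pa g hcons st0 (n+1))).1 ≠
      (entryEdge (wv g hcons st0 (n+1)) (pa g hcons st0 (n+1))).2 := by
    intro hl
    apply Ee_frac g hcons st0 n
    rw [Ee_eq_entry_succ, hl]
    exact hnl _
  have := entryEdge_inj (h1 ▸ he) hloop
  exact nextq_ne g hcons (walk g hcons st0 (n+1)) this.symm

/-- the edge endpoints are the step's endpoints, in order given by direction -/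
lemma Ee_spec (n : ℕ) :
    (¬(qe g hcons st0 n).2 ∧ Ee g hcons st0 n = (wv g hcons st0 n, wv g hcons st0 (n+1))) ∨
    ((qe g hcons st0 n).2 ∧ Ee g hcons st0 n = (wv g hcons st0 (n+1), wv g hcons st0 n)) := by
  rcases hb : (qe g hcons st0 n).2 with _ | _
  · left
    refine ⟨by simp [hb], ?_⟩
    rw [wv_succ]
    show entryEdge _ _ = _
    rw [entryEdge]
    simp [hb]
  · right
    refine ⟨by simp [hb], ?_⟩
    rw [wv_succ]
    show entryEdge _ _ = _
    rw [entryEdge]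
    simp [hb]

lemma wv_ne_succ (hnl : ∀ v : W, IsInt (g v v)) (n : ℕ) :
    wv g hcons st0 n ≠ wv g hcons st0 (n+1) := by
  intro he
  apply Ee_frac g hcons st0 n
  rcases Ee_spec g hcons st0 n with ⟨_, h⟩ | ⟨_, h⟩ <;> rw [h] <;> dsimp only <;>
    rw [← he] <;> exact hnl _





lemma Ee_inj (g : W → W → ℝ) (hcons : ∀ w, ∑ u, g u w = ∑ u, g w u)
    (st0 : FracSt g) (j : ℕ)
    (A : ∀ k l, k < l → l < j → wv g hcons st0 k ≠ wv g hcons st0 l)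
    (hnl : ∀ v : W, IsInt (g v v)) :
    ∀ n m, n < m → m < j → Ee g hcons st0 n ≠ Ee g hcons st0 m := by
  intro n m hnm hmj he
  rcases eq_or_lt_of_le (Nat.succ_le_of_lt hnm) with hm1 | hm1
  · subst hm1; exact Ee_succ_ne g hcons st0 hnl n he
  · rcases Ee_spec g hcons st0 n with ⟨_, h1⟩ | ⟨_, h1⟩ <;>
      rcases Ee_spec g hcons st0 m with ⟨_, h2⟩ | ⟨_, h2⟩ <;>
      rw [h1, h2, Prod.ext_iff] at he
    · exact A n m hnm hmj he.1
    · exact A (n+1) m hm1 hmj he.2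
    · exact A (n+1) m hm1 hmj he.1
    · exact A n m hnm hmj he.2

noncomputable def fracSet (g : W → W → ℝ) : Finset (W × W) :=
  @Finset.filter _ (fun p => ¬ IsInt (g p.1 p.2)) (Classical.decPred _) Finset.univ

lemma mem_fracSet {g : W → W → ℝ} {p : W × W} : p ∈ fracSet g ↔ ¬ IsInt (g p.1 p.2) := by
  simp [fracSet]

lemma exists_reduce (g : W → W → ℝ) (L U : W → W → ℤ)
    (hL : ∀ u v, (L u v : ℝ) ≤ g u v) (hU : ∀ u v, g u v ≤ (U u v : ℝ))
    (hcons : ∀ w, ∑ u, g u w = ∑ u, g w u)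
    (hfrac : ∃ u v, ¬ IsInt (g u v)) :
    ∃ g' : W → W → ℝ, (∀ u v, (L u v : ℝ) ≤ g' u v) ∧ (∀ u v, g' u v ≤ (U u v : ℝ)) ∧
      (∀ w, ∑ u, g' u w = ∑ u, g' w u) ∧ (∀ u v, IsInt (g u v) → g' u v = g u v) ∧
      (fracSet g').card < (fracSet g).card := by
  classical
  by_cases hloop : ∃ v : W, ¬ IsInt (g v v)
  · -- round a fractional self-loop down
    obtain ⟨v, hv⟩ := hloop
    refine ⟨fun a b => if a = v ∧ b = v then (⌊g v v⌋ : ℝ) else g a b, ?_, ?_, ?_, ?_, ?_⟩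
    · intro a b
      dsimp only
      by_cases h : a = v ∧ b = v
      · rw [if_pos h, h.1, h.2]
        exact_mod_cast Int.le_floor.mpr (by exact_mod_cast hL v v)
      · rw [if_neg h]; exact hL a b
    · intro a b
      dsimp only
      by_cases h : a = v ∧ b = v
      · rw [if_pos h, h.1, h.2]
        exact le_trans (Int.floor_le _) (hU v v)
      · rw [if_neg h]; exact hU a b
    · intro w
      rw [← sub_eq_zero, ← Finset.sum_sub_distrib]
      have h0 : ∑ u, (g u w - g w u) = 0 := by
        rw [Finset.sum_sub_distrib, sub_eq_zero]; exact hcons w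
      rw [← h0]
      apply Finset.sum_congr rfl
      intro u _
      by_cases hu : u = v <;> by_cases hw : w = v <;> simp [hu, hw]
    · intro a b hab
      dsimp only
      by_cases h : a = v ∧ b = v
      · exfalso; rw [h.1, h.2] at hab; exact hv hab
      · rw [if_neg h]
    · apply Finset.card_lt_card
      constructor
      · intro p hp
        rw [mem_fracSet] at hp ⊢
        by_cases h : p.1 = v ∧ p.2 = v
        · rw [if_pos h] at hp; exact absurd ⟨⌊g v v⌋, rfl⟩ hp
        · rwa [if_neg h] at hp
      · intro hall
        have := hall ((mem_fracSet (p := (v, v))).mpr hv)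
        rw [mem_fracSet] at this
        refine this ?_
        have hc : ((v, v).1 = v ∧ (v, v).2 = v) := ⟨rfl, rfl⟩
        rw [if_pos hc]
        exact ⟨⌊g v v⌋, rfl⟩
  · push_neg at hloop
    obtain ⟨a0, b0, hab0⟩ := hfrac
    have hst0 : ¬ IsInt (eVal g b0 (a0, true)) := by
      simpa [eVal, entryEdge] using hab0
    set st0 : FracSt g := ⟨(b0, (a0, true)), hst0⟩ with hst0def
    set w : ℕ → W := wv g hcons st0 with hwdef
    set E : ℕ → W × W := Ee g hcons st0 with hEdef
    -- pigeonhole: some vertex repeats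
    have hrep : ∃ m, ∃ k, k < m ∧ w k = w m := by
      obtain ⟨k, hk, l, hl, hkl, he⟩ :=
        Finset.exists_ne_map_eq_of_card_lt_of_maps_to
          (s := Finset.range (Fintype.card W + 1)) (t := Finset.univ)
          (by simp [Finset.card_range])
          (fun a _ => Finset.mem_univ (w a))
      rcases lt_or_gt_of_ne hkl with h | h
      · exact ⟨l, k, h, he⟩
      · exact ⟨k, l, h, he.symm⟩
    set j := Nat.find hrep with hjdef
    obtain ⟨i, hij, hwij⟩ := Nat.find_spec hrep
    have A : ∀ k l, k < l → l < j → w k ≠ w l := by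
      intro k l h1 h2 he
      exact Nat.find_min hrep h2 ⟨k, h1, he⟩
    have hED : ∀ n m, n < m → m < j → E n ≠ E m := Ee_inj g hcons st0 j A hloop
    -- signs and rooms
    set sg : ℕ → ℝ := fun n => if (qe g hcons st0 n).2 then -1 else 1 with hsgdef
    set chi : W → W → ℝ := fun a b => ∑ n ∈ Finset.Ico i j, if E n = (a, b) then sg n else 0
      with hchidef
    set room : ℕ → ℝ := fun n => if (qe g hcons st0 n).2
      then g (E n).1 (E n).2 - (⌊g (E n).1 (E n).2⌋ : ℝ)
      else (⌈g (E n).1 (E n).2⌉ : ℝ) - g (E n).1 (E n).2 with hroomdef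
    have hroom_pos : ∀ n, 0 < room n := by
      intro n
      have hf := Ee_frac g hcons st0 n
      rw [hroomdef]
      dsimp only
      by_cases hb : (qe g hcons st0 n).2
      · rw [if_pos hb]; linarith [floor_lt_of_not_isInt hf]
      · rw [if_neg hb]; linarith [lt_ceil_of_not_isInt hf]
    obtain ⟨n0, hn0, hn0min⟩ := Finset.exists_min_image (Finset.Ico i j) room
      ⟨i, Finset.mem_Ico.mpr ⟨le_refl i, hij⟩⟩
    set ε := room n0 with hεdef
    have hεpos : 0 < ε := hroom_pos n0
    set g' : W → W → ℝ := fun a b => g a b + ε * chi a b with hg'def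
    -- characterize chi
    have huniq : ∀ n, n ∈ Finset.Ico i j → ∀ m ∈ Finset.Ico i j, E m = E n → m = n := by
      intro n hn m hm he
      by_contra hne
      rcases lt_or_gt_of_ne hne with h | h
      · exact hED m n h (Finset.mem_Ico.mp hn).2 he
      · exact hED n m h (Finset.mem_Ico.mp hm).2 he.symm
    have hchi_eq : ∀ n ∈ Finset.Ico i j, chi (E n).1 (E n).2 = sg n := by
      intro n hn
      rw [hchidef]
      dsimp only
      rw [Finset.sum_eq_single_of_mem n hn]
      · rw [if_pos (by rw [Prod.mk.eta])]
      · intro m hm hne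
        rw [if_neg]
        rw [Prod.mk.eta]
        intro he
        exact hne (huniq n hn m hm he)
    have hchi_zero : ∀ a b, (∀ n ∈ Finset.Ico i j, E n ≠ (a, b)) → chi a b = 0 := by
      intro a b h
      rw [hchidef]
      exact Finset.sum_eq_zero fun n hn => if_neg (h n hn)
    -- integral entries unchanged
    have hpres : ∀ u v, IsInt (g u v) → g' u v = g u v := by
      intro u v hi
      have : chi u v = 0 := by
        apply hchi_zero
        intro n hn he
        exact Ee_frac g hcons st0 n (by rw [← hEdef, he]; exact hi)
      rw [hg'def]; dsimp only; rw [this, mul_zero, add_zero]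
    -- bounds
    have hcases : ∀ a b, g' a b = g a b ∨
        ∃ n ∈ Finset.Ico i j, E n = (a, b) ∧ g' a b = g a b + ε * sg n := by
      intro a b
      by_cases h : ∃ n ∈ Finset.Ico i j, E n = (a, b)
      · obtain ⟨n, hn, he⟩ := h
        right
        refine ⟨n, hn, he, ?_⟩
        rw [hg'def]; dsimp only
        have hcc := hchi_eq n hn
        rw [he] at hcc
        rw [hcc]
      · left
        push_neg at h
        rw [hg'def]; dsimp only
        rw [hchi_zero a b h, mul_zero, add_zero]
    have hL' : ∀ u v, (L u v : ℝ) ≤ g' u v := by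
      intro u v
      rcases hcases u v with h | ⟨n, hn, he, h⟩
      · rw [h]; exact hL u v
      · rw [h, hsgdef]
        dsimp only
        by_cases hb : (qe g hcons st0 n).2
        · rw [if_pos hb]
          have hε : ε ≤ room n := hn0min n hn
          rw [hroomdef] at hε
          dsimp only at hε
          rw [if_pos hb, he] at hε
          have : (L u v : ℝ) ≤ (⌊g u v⌋ : ℝ) :=
            by exact_mod_cast Int.le_floor.mpr (by exact_mod_cast hL u v)
          linarith
        · rw [if_neg hb]
          nlinarith [hL u v, hεpos]
    have hU' : ∀ u v, g' u v ≤ (U u v : ℝ) := by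
      intro u v
      rcases hcases u v with h | ⟨n, hn, he, h⟩
      · rw [h]; exact hU u v
      · rw [h, hsgdef]
        dsimp only
        by_cases hb : (qe g hcons st0 n).2
        · rw [if_pos hb]
          nlinarith [hU u v, hεpos]
        · rw [if_neg hb]
          have hε : ε ≤ room n := hn0min n hn
          rw [hroomdef] at hε
          dsimp only at hε
          rw [if_neg hb, he] at hε
          have : (⌈g u v⌉ : ℝ) ≤ (U u v : ℝ) :=
            by exact_mod_cast Int.ceil_le.mpr (hU u v)
          linarith
    -- conservation
    have hin : ∀ n (y : W), (∑ u, if E n = (u, y) then sg n else 0)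
        = if (E n).2 = y then sg n else 0 := by
      intro n y
      by_cases hby : (E n).2 = y
      · rw [if_pos hby, ← hby]
        rw [Finset.sum_eq_single_of_mem (E n).1 (Finset.mem_univ _)]
        · rw [if_pos (by rw [Prod.mk.eta])]
        · intro m _ hne
          rw [if_neg]
          intro he
          exact hne (by rw [he])
      · rw [if_neg hby]
        exact Finset.sum_eq_zero fun u _ => if_neg (fun he => hby (by rw [he]))
    have hout : ∀ n (y : W), (∑ u, if E n = (y, u) then sg n else 0)
        = if (E n).1 = y then sg n else 0 := by
      intro n y
      by_cases hby : (E n).1 = y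
      · rw [if_pos hby, ← hby]
        rw [Finset.sum_eq_single_of_mem (E n).2 (Finset.mem_univ _)]
        · rw [if_pos (by rw [Prod.mk.eta])]
        · intro m _ hne
          rw [if_neg]
          intro he
          exact hne (by rw [he])
      · rw [if_neg hby]
        exact Finset.sum_eq_zero fun u _ => if_neg (fun he => hby (by rw [he]))
    have hstep : ∀ n (y : W),
        ((if (E n).2 = y then sg n else 0) - (if (E n).1 = y then sg n else 0))
        = (if w (n+1) = y then (1:ℝ) else 0) - (if w n = y then (1:ℝ) else 0) := by
      intro n y
      have hnn := wv_ne_succ g hcons st0 hloop n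
      rcases Ee_spec g hcons st0 n with ⟨hb, hEn⟩ | ⟨hb, hEn⟩ <;>
        simp only [hEdef, hwdef, hsgdef, hEn]
      · rw [if_neg hb]
      · rw [if_pos hb]
        by_cases h1 : wv g hcons st0 n = y <;> by_cases h2 : wv g hcons st0 (n+1) = y
        · exact absurd (h1.trans h2.symm) hnn
        · simp [h1, h2]
        · simp [h1, h2]
        · simp [h1, h2]
    have hchi_cons : ∀ y, (∑ u, chi u y) - (∑ u, chi y u) = 0 := by
      intro y
      rw [hchidef]
      dsimp only
      rw [Finset.sum_comm, Finset.sum_comm (s := Finset.univ)]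
      rw [← Finset.sum_sub_distrib]
      have : ∀ n ∈ Finset.Ico i j,
          ((∑ u, if E n = (u, y) then sg n else 0) - (∑ u, if E n = (y, u) then sg n else 0))
          = (if w (n+1) = y then (1:ℝ) else 0) - (if w n = y then (1:ℝ) else 0) := by
        intro n _
        rw [hin, hout, hstep]
      rw [Finset.sum_congr rfl this]
      -- telescoping
      have htel : ∀ m : ℕ, ∑ n ∈ Finset.Ico i (i + m),
          ((if w (n+1) = y then (1:ℝ) else 0) - (if w n = y then (1:ℝ) else 0))
          = (if w (i+m) = y then (1:ℝ) else 0) - (if w i = y then (1:ℝ) else 0) := by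
        intro m
        induction m with
        | zero => simp
        | succ m ih =>
          rw [show i + (m + 1) = (i + m) + 1 from rfl,
            Finset.sum_Ico_succ_top (Nat.le_add_right i m), ih]
          ring
      have hje : j = i + (j - i) := by omega
      rw [hje, htel, ← hje, hwij]
      ring
    have hcons' : ∀ y, ∑ u, g' u y = ∑ u, g' y u := by
      intro y
      rw [hg'def]
      dsimp only
      rw [Finset.sum_add_distrib, Finset.sum_add_distrib, ← Finset.mul_sum, ← Finset.mul_sum]
      have := hchi_cons y
      have h2 := hcons y
      nlinarith [hchi_cons y, hcons y]
    -- strict decrease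
    have hwitness : IsInt (g' (E n0).1 (E n0).2) := by
      have hc : chi (E n0).1 (E n0).2 = sg n0 := hchi_eq n0 hn0
      rw [hg'def]
      dsimp only
      rw [hc, hεdef, hroomdef, hsgdef]
      dsimp only
      by_cases hb : (qe g hcons st0 n0).2
      · rw [if_pos hb, if_pos hb]
        exact ⟨⌊g (E n0).1 (E n0).2⌋, by ring⟩
      · rw [if_neg hb, if_neg hb]
        exact ⟨⌈g (E n0).1 (E n0).2⌉, by ring⟩
    refine ⟨g', hL', hU', hcons', hpres, ?_⟩
    apply Finset.card_lt_card
    constructor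
    · intro p hp
      rw [mem_fracSet] at hp ⊢
      intro hi
      exact hp (by rw [hpres p.1 p.2 hi]; exact hi)
    · intro hall
      have h1 : E n0 ∈ fracSet g := mem_fracSet.mpr (Ee_frac g hcons st0 n0)
      have h2 := hall h1
      rw [mem_fracSet] at h2
      exact h2 hwitness




lemma circ_aux : ∀ (n : ℕ) (g : W → W → ℝ) (L U : W → W → ℤ),
    (fracSet g).card ≤ n →
    (∀ u v, (L u v : ℝ) ≤ g u v) → (∀ u v, g u v ≤ (U u v : ℝ)) →
    (∀ w, ∑ u, g u w = ∑ u, g w u) →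
    ∃ h : W → W → ℝ, (∀ u v, (L u v : ℝ) ≤ h u v) ∧ (∀ u v, h u v ≤ (U u v : ℝ)) ∧
      (∀ w, ∑ u, h u w = ∑ u, h w u) ∧ (∀ u v, IsInt (h u v)) ∧
      (∀ u v, IsInt (g u v) → h u v = g u v) := by
  intro n
  induction n with
  | zero =>
    intro g L U hcard hL hU hcons
    refine ⟨g, hL, hU, hcons, ?_, fun _ _ _ => rfl⟩
    intro u v
    by_contra hni
    have : (u, v) ∈ fracSet g := mem_fracSet.mpr hni
    have := Finset.card_pos.mpr ⟨_, this⟩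
    omega
  | succ n ih =>
    intro g L U hcard hL hU hcons
    by_cases hfrac : ∃ u v, ¬ IsInt (g u v)
    · obtain ⟨g', hL', hU', hcons', hpres, hlt⟩ := exists_reduce g L U hL hU hcons hfrac
      obtain ⟨h, h1, h2, h3, h4, h5⟩ := ih g' L U (by omega) hL' hU' hcons'
      refine ⟨h, h1, h2, h3, h4, ?_⟩
      intro u v hi
      rw [h5 u v (by rw [hpres u v hi]; exact hi), hpres u v hi]
    · push_neg at hfrac
      exact ⟨g, hL, hU, hcons, fun u v => not_not.mp (not_not_intro (hfrac u v)), fun _ _ _ => rfl⟩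

lemma circulation_rounding (g : W → W → ℝ) (L U : W → W → ℤ)
    (hL : ∀ u v, (L u v : ℝ) ≤ g u v) (hU : ∀ u v, g u v ≤ (U u v : ℝ))
    (hcons : ∀ w, ∑ u, g u w = ∑ u, g w u) :
    ∃ h : W → W → ℝ, (∀ u v, (L u v : ℝ) ≤ h u v) ∧ (∀ u v, h u v ≤ (U u v : ℝ)) ∧
      (∀ w, ∑ u, h u w = ∑ u, h w u) ∧ (∀ u v, IsInt (h u v)) ∧
      (∀ u v, IsInt (g u v) → h u v = g u v) :=
  circ_aux (fracSet g).card g L U le_rfl hL hU hcons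


section Main

variable {V : Type*} [Fintype V] [DecidableEq V]

/-- Augmented graph values -/
def mkG (N : FlowNetwork V) (K : ℕ) (Dj : ℕ → Finset V) (x : V → ℝ) (f : V → V → ℝ) :
    (V ⊕ Fin K) → (V ⊕ Fin K) → ℝ
  | Sum.inl u, Sum.inl v => f u v
  | Sum.inl d, Sum.inr j => if d ∈ Dj j.1 then x d else 0
  | Sum.inr j, Sum.inl v => if v = N.source then ∑ d ∈ Dj j.1, x d else 0
  | Sum.inr _, Sum.inr _ => 0

noncomputable def mkL (N : FlowNetwork V) (K : ℕ) (Dj : ℕ → Finset V) (x : V → ℝ) (nn : Fin K → ℤ) :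
    (V ⊕ Fin K) → (V ⊕ Fin K) → ℤ
  | Sum.inl _, Sum.inl _ => 0
  | Sum.inl d, Sum.inr j => if d ∈ Dj j.1 then ⌊x d⌋ else 0
  | Sum.inr j, Sum.inl v => if v = N.source then nn j else 0
  | Sum.inr _, Sum.inr _ => 0

noncomputable def mkU (N : FlowNetwork V) (K : ℕ) (Dj : ℕ → Finset V) (x : V → ℝ) (nn : Fin K → ℤ) :
    (V ⊕ Fin K) → (V ⊕ Fin K) → ℤ
  | Sum.inl u, Sum.inl v => if u ∈ N.sinks then 0 else N.cap u v
  | Sum.inl d, Sum.inr j => if d ∈ Dj j.1 then min ⌈x d⌉ (N.sinkCap d) else 0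
  | Sum.inr j, Sum.inl v => if v = N.source then nn j else 0
  | Sum.inr _, Sum.inr _ => 0

theorem main
    (N : FlowNetwork V) (K : ℕ) (Dj : ℕ → Finset V)
    (hsub : ∀ j < K, Dj j ⊆ N.sinks)
    (hdisj : ∀ i < K, ∀ j < K, i ≠ j → Disjoint (Dj i) (Dj j))
    (hcover : (Finset.range K).biUnion Dj = N.sinks)
    (x : V → ℝ)
    (hx : ∃ f, IsFlow N f ∧ ∀ d ∈ N.sinks, inflow f d = x d)
    (hint : ∀ j < K, ∃ n : ℤ, ∑ d ∈ Dj j, x d = (n : ℝ)) :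
    ∃ f : V → V → ℝ, IsFlow N f ∧
      (∀ u v, ∃ n : ℤ, f u v = (n : ℝ)) ∧
      (∀ d ∈ N.sinks, inflow f d = (⌊x d⌋ : ℝ) ∨ inflow f d = (⌈x d⌉ : ℝ)) ∧
      (∀ j < K, ∑ d ∈ Dj j, inflow f d = ∑ d ∈ Dj j, x d) := by
  classical
  obtain ⟨f, ⟨hf0, hfcap, hfcons, hfsink, hfscap⟩, hfx⟩ := hx
  -- basic facts about x
  have hx0 : ∀ d ∈ N.sinks, 0 ≤ x d := by
    intro d hd
    rw [← hfx d hd]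
    exact Finset.sum_nonneg fun u _ => hf0 u d
  have hxcap : ∀ d ∈ N.sinks, x d ≤ (N.sinkCap d : ℝ) := by
    intro d hd
    rw [← hfx d hd]
    exact hfscap d hd
  -- block membership helpers
  have hmem_sinks : ∀ {d : V} {j : Fin K}, d ∈ Dj j.1 → d ∈ N.sinks :=
    fun {d} {j} hd => hsub j.1 j.2 hd
  have huniqj : ∀ (d : V) (j j' : Fin K), d ∈ Dj j.1 → d ∈ Dj j'.1 → j = j' := by
    intro d j j' hj hj'
    by_contra hne
    exact Finset.disjoint_left.mp
      (hdisj j.1 j.2 j'.1 j'.2 (fun h => hne (Fin.val_injective h))) hj hj'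
  have hexj : ∀ d ∈ N.sinks, ∃ j : Fin K, d ∈ Dj j.1 := by
    intro d hd
    rw [← hcover] at hd
    obtain ⟨j, hj, hdj⟩ := Finset.mem_biUnion.mp hd
    exact ⟨⟨j, Finset.mem_range.mp hj⟩, hdj⟩
  -- the chosen integer block sums
  set nn : Fin K → ℤ := fun j => (hint j.1 j.2).choose with hnn
  have hnn_spec : ∀ j : Fin K, ∑ d ∈ Dj j.1, x d = (nn j : ℝ) :=
    fun j => (hint j.1 j.2).choose_spec
  -- global conservation
  have hglobal : outflow f N.source = inflow f N.source + ∑ d ∈ N.sinks, inflow f d := by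
    have htot : ∑ v, (inflow f v - outflow f v) = 0 := by
      rw [Finset.sum_sub_distrib, sub_eq_zero]
      unfold inflow outflow
      exact Finset.sum_comm
    have hsplit := Finset.sum_add_sum_compl N.sinks (fun v => inflow f v - outflow f v)
    rw [htot] at hsplit
    have hsinks : ∑ v ∈ N.sinks, (inflow f v - outflow f v) = ∑ v ∈ N.sinks, inflow f v := by
      apply Finset.sum_congr rfl
      intro d hd
      have : outflow f d = 0 := Finset.sum_eq_zero fun u _ => hfsink d hd u
      rw [this, sub_zero]
    have hsrc_mem : N.source ∈ N.sinksᶜ := Finset.mem_compl.mpr N.source_not_sink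
    have hcompl : ∑ v ∈ N.sinksᶜ, (inflow f v - outflow f v)
        = inflow f N.source - outflow f N.source := by
      rw [← Finset.add_sum_erase _ _ hsrc_mem]
      have : ∑ v ∈ N.sinksᶜ.erase N.source, (inflow f v - outflow f v) = 0 := by
        apply Finset.sum_eq_zero
        intro v hv
        have hne : v ≠ N.source := Finset.ne_of_mem_erase hv
        have hns : v ∉ N.sinks := Finset.mem_compl.mp (Finset.mem_of_mem_erase hv)
        rw [hfcons v hne hns, sub_self]
      rw [this, add_zero]
    rw [hsinks, hcompl] at hsplit
    linarith
  have hblocksum : ∑ d ∈ N.sinks, x d = ∑ j : Fin K, ∑ d ∈ Dj j.1, x d := by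
    rw [← hcover, Finset.sum_biUnion, ← Fin.sum_univ_eq_sum_range (fun j => ∑ d ∈ Dj j, x d) K]
    · intro a ha b hb hab
      exact hdisj a (Finset.mem_range.mp (Finset.mem_coe.mp ha))
        b (Finset.mem_range.mp (Finset.mem_coe.mp hb)) hab
  -- bounds for g
  set g := mkG N K Dj x f with hg
  set L := mkL N K Dj x nn with hLdef
  set U := mkU N K Dj x nn with hUdef
  have hL : ∀ a b, (L a b : ℝ) ≤ g a b := by
    rintro (u | j) (v | j') <;> simp only [hg, hLdef, mkG, mkL]
    · push_cast; exact hf0 u v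
    · by_cases h : u ∈ Dj j'.1
      · rw [if_pos h, if_pos h]
        exact Int.floor_le (x u)
      · rw [if_neg h, if_neg h]; norm_num
    · by_cases h : v = N.source
      · rw [if_pos h, if_pos h, ← hnn_spec j]
      · rw [if_neg h, if_neg h]; norm_num
    · norm_num
  have hU : ∀ a b, g a b ≤ (U a b : ℝ) := by
    rintro (u | j) (v | j') <;> simp only [hg, hUdef, mkG, mkU]
    · by_cases h : u ∈ N.sinks
      · rw [if_pos h, hfsink u h v]; norm_num
      · rw [if_neg h]; push_cast; exact hfcap u v
    · by_cases h : u ∈ Dj j'.1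
      · rw [if_pos h, if_pos h]
        push_cast
        rw [le_min_iff]
        exact ⟨Int.le_ceil (x u), hxcap u (hmem_sinks h)⟩
      · rw [if_neg h, if_neg h]; norm_num
    · by_cases h : v = N.source
      · rw [if_pos h, if_pos h, ← hnn_spec j]
      · rw [if_neg h, if_neg h]; norm_num
    · norm_num
  -- conservation for g
  have hgcons : ∀ w : V ⊕ Fin K, ∑ u, g u w = ∑ u, g w u := by
    rintro (v | j)
    · rw [Fintype.sum_sum_type, Fintype.sum_sum_type]
      simp only [hg, mkG]
      by_cases hv : v ∈ N.sinks
      · have hvs : v ≠ N.source := fun h => N.source_not_sink (h ▸ hv)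
        rw [Finset.sum_eq_zero (fun j _ => if_neg hvs), add_zero]
        obtain ⟨jv, hjv⟩ := hexj v hv
        rw [Finset.sum_eq_single_of_mem jv (Finset.mem_univ _)
          (fun j _ hne => if_neg (fun h => hne (huniqj v j jv h hjv))), if_pos hjv]
        rw [Finset.sum_eq_zero (fun u _ => hfsink v hv u), zero_add]
        exact hfx v hv
      · by_cases hvs : v = N.source
        · subst hvs
          rw [Finset.sum_eq_zero (fun (j : Fin K) _ => if_neg (fun h : N.source ∈ Dj j.1 =>
              hv (hmem_sinks h))), add_zero]
          have : ∀ j : Fin K, (if N.source = N.source then ∑ d ∈ Dj j.1, x d else 0)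
              = ∑ d ∈ Dj j.1, x d := fun j => if_pos rfl
          rw [Finset.sum_congr rfl (fun j _ => this j)]
          have h1 : ∑ u, f u N.source = inflow f N.source := rfl
          have h2 : ∑ u, f N.source u = outflow f N.source := rfl
          rw [h1, h2, hglobal]
          have : ∑ d ∈ N.sinks, inflow f d = ∑ d ∈ N.sinks, x d :=
            Finset.sum_congr rfl hfx
          rw [this, hblocksum]
        · rw [Finset.sum_eq_zero (fun j _ => if_neg hvs), add_zero,
            Finset.sum_eq_zero (fun (j : Fin K) _ => if_neg (fun h : v ∈ Dj j.1 =>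
              hv (hmem_sinks h))), add_zero]
          exact hfcons v hvs hv
    · rw [Fintype.sum_sum_type, Fintype.sum_sum_type]
      simp only [hg, mkG, Finset.sum_const_zero, add_zero]
      rw [Finset.sum_ite_mem, Finset.univ_inter]
      simp only [Finset.sum_ite_eq', Finset.mem_univ, if_true]
  -- apply the circulation rounding
  obtain ⟨h, hhL, hhU, hhcons, hhint, hhpres⟩ := circulation_rounding g L U hL hU hgcons
  -- pinned edges
  have hpin : ∀ a b (c : ℤ), L a b = c → U a b = c → h a b = (c : ℝ) := by
    intro a b c h1 h2
    have := hhL a b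
    have := hhU a b
    rw [h1] at *
    rw [h2] at *
    linarith
  set f' : V → V → ℝ := fun u v => h (Sum.inl u) (Sum.inl v) with hf'
  -- pinned-zero lemmas
  have hzero_rl : ∀ (j : Fin K) (v : V), v ≠ N.source → h (Sum.inr j) (Sum.inl v) = 0 := by
    intro j v hv
    exact_mod_cast hpin _ _ 0 (by simp [hLdef, mkL, hv]) (by simp [hUdef, mkU, hv])
  have hzero_lr : ∀ (d : V) (j : Fin K), d ∉ Dj j.1 → h (Sum.inl d) (Sum.inr j) = 0 := by
    intro d j hd
    exact_mod_cast hpin _ _ 0 (by simp [hLdef, mkL, hd]) (by simp [hUdef, mkU, hd])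
  have hzero_rr : ∀ (j j' : Fin K), h (Sum.inr j) (Sum.inr j') = 0 := by
    intro j j'
    exact_mod_cast hpin _ _ 0 (by simp [hLdef, mkL]) (by simp [hUdef, mkU])
  have hzero_sink : ∀ (d : V), d ∈ N.sinks → ∀ v, h (Sum.inl d) (Sum.inl v) = 0 := by
    intro d hd v
    exact_mod_cast hpin _ _ 0 (by simp [hLdef, mkL]) (by simp [hUdef, mkU, hd])
  have hnr : ∀ (j : Fin K), h (Sum.inr j) (Sum.inl N.source) = (nn j : ℝ) := by
    intro j
    exact hpin _ _ (nn j) (by simp [hLdef, mkL]) (by simp [hUdef, mkU])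
  -- inflow of f' at a sink
  have hinfl : ∀ d ∈ N.sinks, ∀ (jd : Fin K), d ∈ Dj jd.1 →
      inflow f' d = h (Sum.inl d) (Sum.inr jd) := by
    intro d hd jd hjd
    have hc := hhcons (Sum.inl d)
    rw [Fintype.sum_sum_type, Fintype.sum_sum_type] at hc
    have hds : d ≠ N.source := fun h => N.source_not_sink (h ▸ hd)
    rw [Finset.sum_eq_zero (fun j _ => hzero_rl j d hds), add_zero] at hc
    rw [Finset.sum_eq_zero (fun u _ => hzero_sink d hd u), zero_add] at hc
    rw [Finset.sum_eq_single_of_mem jd (Finset.mem_univ _)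
      (fun j _ hne => hzero_lr d j (fun hm => hne (huniqj d j jd hm hjd)))] at hc
    exact hc
  refine ⟨f', ⟨?_, ?_, ?_, ?_, ?_⟩, ?_, ?_, ?_⟩
  · -- nonneg
    intro u v
    have := hhL (Sum.inl u) (Sum.inl v)
    simpa [hLdef, mkL] using this
  · -- cap
    intro u v
    by_cases hu : u ∈ N.sinks
    · rw [hf']
      dsimp only
      rw [hzero_sink u hu v]
      positivity
    · have := hhU (Sum.inl u) (Sum.inl v)
      simp only [hUdef, mkU, if_neg hu] at this
      exact_mod_cast this
  · -- conservation
    intro v hvs hvnot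
    have hc := hhcons (Sum.inl v)
    rw [Fintype.sum_sum_type, Fintype.sum_sum_type] at hc
    rw [Finset.sum_eq_zero (fun j _ => hzero_rl j v hvs), add_zero] at hc
    rw [Finset.sum_eq_zero (fun j _ => hzero_lr v j (fun hm => hvnot (hmem_sinks hm))),
      add_zero] at hc
    exact hc
  · -- sinks have no outflow
    intro d hd u
    exact hzero_sink d hd u
  · -- sink capacity
    intro d hd
    obtain ⟨jd, hjd⟩ := hexj d hd
    rw [hinfl d hd jd hjd]
    have := hhU (Sum.inl d) (Sum.inr jd)
    rw [hUdef] at this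
    simp only [mkU, if_pos hjd] at this
    refine le_trans this ?_
    have : (min ⌈x d⌉ (N.sinkCap d) : ℤ) ≤ (N.sinkCap d : ℤ) := min_le_right _ _
    exact_mod_cast this
  · -- integrality
    intro u v
    exact hhint (Sum.inl u) (Sum.inl v)
  · -- floor or ceil
    intro d hd
    obtain ⟨jd, hjd⟩ := hexj d hd
    rw [hinfl d hd jd hjd]
    obtain ⟨m, hm⟩ := hhint (Sum.inl d) (Sum.inr jd)
    have hlo := hhL (Sum.inl d) (Sum.inr jd)
    have hhi := hhU (Sum.inl d) (Sum.inr jd)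
    rw [hm] at hlo hhi
    simp only [hLdef, hUdef, mkL, mkU, if_pos hjd] at hlo hhi
    have h1 : (⌊x d⌋ : ℤ) ≤ m := by exact_mod_cast hlo
    have h2 : m ≤ min ⌈x d⌉ (N.sinkCap d) := by exact_mod_cast hhi
    have h3 : ⌈x d⌉ ≤ ⌊x d⌋ + 1 := Int.ceil_le_floor_add_one (x d)
    have h4 : m ≤ ⌈x d⌉ := le_trans h2 (min_le_left _ _)
    have h5 : ⌊x d⌋ ≤ ⌈x d⌉ := Int.floor_le_ceil (x d)
    have : m = ⌊x d⌋ ∨ m = ⌈x d⌉ := by omega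
    rcases this with h | h
    · left; rw [hm, h]
    · right; rw [hm, h]
  · -- block sums
    intro j hj
    set jf : Fin K := ⟨j, hj⟩ with hjf
    have hstep : ∀ d ∈ Dj j, inflow f' d = h (Sum.inl d) (Sum.inr jf) := by
      intro d hd
      exact hinfl d (hsub j hj hd) jf hd
    rw [Finset.sum_congr rfl hstep]
    have hc := hhcons (Sum.inr jf)
    rw [Fintype.sum_sum_type, Fintype.sum_sum_type] at hc
    rw [Finset.sum_eq_zero (fun j' _ => hzero_rr j' jf), add_zero] at hc
    rw [Finset.sum_eq_zero (fun j' _ => hzero_rr jf j'), add_zero] at hc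
    rw [Finset.sum_eq_single_of_mem N.source (Finset.mem_univ _)
      (fun v _ hne => hzero_rl jf v hne), hnr jf] at hc
    have hleft : ∑ v : V, h (Sum.inl v) (Sum.inr jf) = ∑ v ∈ Dj j, h (Sum.inl v) (Sum.inr jf) := by
      rw [← Finset.sum_subset (Finset.subset_univ (Dj j))]
      intro v _ hv
      exact hzero_lr v jf hv
    rw [hleft] at hc
    rw [hc, ← hnn_spec jf]


end Main
end IntRound

/-- Rounding: if a (possibly fractional) vector `x` of flows into the sinks is
achievable and every block sum over a partition `(D_1,…,D_K)` of the sinks is an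
integer, then there is an integral feasible flow whose inflow at every sink is
the floor or the ceiling of `x`, with the same block sums as `x`. -/
theorem integral_rounding_of_achievable
    {V : Type*} [Fintype V] [DecidableEq V] (N : FlowNetwork V)
    (K : ℕ) (Dj : ℕ → Finset V)
    (hsub : ∀ j < K, Dj j ⊆ N.sinks)
    (hdisj : ∀ i < K, ∀ j < K, i ≠ j → Disjoint (Dj i) (Dj j))
    (hcover : (Finset.range K).biUnion Dj = N.sinks)
    (x : V → ℝ)
    (hx : ∃ f, IsFlow N f ∧ ∀ d ∈ N.sinks, inflow f d = x d)
    (hint : ∀ j < K, ∃ n : ℤ, ∑ d ∈ Dj j, x d = (n : ℝ)) :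
    ∃ f : V → V → ℝ, IsFlow N f ∧
      (∀ u v, ∃ n : ℤ, f u v = (n : ℝ)) ∧
      (∀ d ∈ N.sinks, inflow f d = (⌊x d⌋ : ℝ) ∨ inflow f d = (⌈x d⌉ : ℝ)) ∧
      (∀ j < K, ∑ d ∈ Dj j, inflow f d = ∑ d ∈ Dj j, x d) := by
  exact IntRound.main N K Dj hsub hdisj hcover x hx hint
end

section
/- In the teacher transfer problem, there is a bijection between transfers and integer feasible flows in the associated network G: every transfer induces an integer flow respecting all capacity and conservation constraints, and every integer feasible flow induces a valid transfer. -/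
open Finset

variable {S D T : Type*} [Fintype S] [Fintype D] [Fintype T]
  [DecidableEq S] [DecidableEq D] [DecidableEq T]

/-- A transfer: each teacher stays at her initial surplus school or moves to an
acceptable deficit school; at most `α s` teachers leave each surplus school `s`;
at most `β d` teachers arrive at each deficit school `d`. -/
def IsTransfer (O : T → S) (A : T → Finset D) (α : S → ℕ) (β : D → ℕ)
    (σ : T → D ⊕ S) : Prop :=
  (∀ t, (∃ d ∈ A t, σ t = Sum.inl d) ∨ σ t = Sum.inr (O t)) ∧
  (∀ s : S, (Finset.univ.filter fun t => O t = s ∧ σ t ≠ Sum.inr (O t)).card ≤ α s) ∧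
  (∀ d : D, (Finset.univ.filter fun t => σ t = Sum.inl d).card ≤ β d)

/-- An integer feasible flow in the associated network `G`, encoded by the flow
on source→school edges, school→teacher edges, and teacher→deficit-school edges. -/
def IsGFlow (O : T → S) (A : T → Finset D) (α : S → ℕ) (β : D → ℕ)
    (f : (S → ℕ) × (T → ℕ) × (T → D → ℕ)) : Prop :=
  (∀ s, f.1 s ≤ α s) ∧
  (∀ t, f.2.1 t ≤ 1) ∧
  (∀ t d, f.2.2 t d ≤ 1) ∧
  (∀ t d, d ∉ A t → f.2.2 t d = 0) ∧
  (∀ s, f.1 s = ∑ t ∈ Finset.univ.filter fun t => O t = s, f.2.1 t) ∧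
  (∀ t, f.2.1 t = ∑ d, f.2.2 t d) ∧
  (∀ d, ∑ t, f.2.2 t d ≤ β d)

/-- The integer flow induced by a transfer. -/
def transferFlow (O : T → S) (σ : T → D ⊕ S) :
    (S → ℕ) × (T → ℕ) × (T → D → ℕ) :=
  ⟨fun s => (Finset.univ.filter fun t => O t = s ∧ σ t ≠ Sum.inr (O t)).card,
   fun t => if σ t = Sum.inr (O t) then 0 else 1,
   fun t d => if σ t = Sum.inl d then 1 else 0⟩

open Classical in
/-- The transfer induced by an integer flow. -/
noncomputable def flowTransfer (O : T → S) (f : (S → ℕ) × (T → ℕ) × (T → D → ℕ)) :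
    T → D ⊕ S := fun t =>
  if h : ∃ d, f.2.2 t d = 1 then Sum.inl h.choose else Sum.inr (O t)

lemma flow_uniq {O : T → S} {A : T → Finset D} {α : S → ℕ} {β : D → ℕ}
    {f : (S → ℕ) × (T → ℕ) × (T → D → ℕ)} (hf : IsGFlow O A α β f)
    {t : T} {d d' : D} (h1 : f.2.2 t d = 1) (h2 : f.2.2 t d' = 1) : d = d' := by
  by_contra hne
  have hle : f.2.2 t d + f.2.2 t d' ≤ ∑ x, f.2.2 t x := by
    rw [← Finset.sum_pair hne]
    exact Finset.sum_le_sum_of_subset (Finset.subset_univ _)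
  have := hf.2.1 t
  rw [hf.2.2.2.2.2.1 t] at this
  omega

lemma transfer_isGFlow (O : T → S) (A : T → Finset D) (α : S → ℕ) (β : D → ℕ)
    (σ : T → D ⊕ S) (hσ : IsTransfer O A α β σ) :
    IsGFlow O A α β (transferFlow O σ) := by
  obtain ⟨h1, h2, h3⟩ := hσ
  refine ⟨h2, ?_, ?_, ?_, ?_, ?_, ?_⟩
  · intro t; simp only [transferFlow]; split <;> omega
  · intro t d; simp only [transferFlow]; split <;> omega
  · intro t d hd
    simp only [transferFlow, ite_eq_right_iff]
    intro h
    rcases h1 t with ⟨d', hd', hσ'⟩ | hσ'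
    · rw [hσ'] at h; cases h; exact absurd hd' hd
    · rw [hσ'] at h; cases h
  · intro s
    simp only [transferFlow, Finset.card_filter, Finset.sum_filter]
    apply Finset.sum_congr rfl
    intro t _
    by_cases h : O t = s <;> by_cases h' : σ t = Sum.inr (O t) <;> simp [h, h']
  · intro t
    simp only [transferFlow]
    rcases h1 t with ⟨d, hd, hσ'⟩ | hσ'
    · rw [hσ']; simp [Sum.inl.injEq, eq_comm]
    · rw [hσ']; simp
  · intro d
    have : (∑ t, if σ t = Sum.inl d then 1 else 0) =
        (Finset.univ.filter fun t => σ t = Sum.inl d).card :=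
      (Finset.card_filter _ _).symm
    simpa [transferFlow, this] using h3 d

lemma flowTransfer_flow (O : T → S) (A : T → Finset D) (α : S → ℕ) (β : D → ℕ)
    (f : (S → ℕ) × (T → ℕ) × (T → D → ℕ)) (hf : IsGFlow O A α β f) :
    transferFlow O (flowTransfer O f) = f := by
  classical
  have h3 : ∀ t d, (if flowTransfer O f t = Sum.inl d then 1 else 0) = f.2.2 t d := by
    intro t d
    rcases Nat.le_one_iff_eq_zero_or_eq_one.mp (hf.2.2.1 t d) with h0 | h1
    · rw [h0]
      simp only [flowTransfer, ite_eq_right_iff]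
      split
      · rename_i h
        rw [ite_eq_right_iff]
        intro heq
        cases heq
        have := h.choose_spec
        omega
      · rw [ite_eq_right_iff]; intro heq; cases heq
    · rw [h1]
      have hex : ∃ d', f.2.2 t d' = 1 := ⟨d, h1⟩
      simp only [flowTransfer, dif_pos hex]
      have := flow_uniq hf hex.choose_spec h1
      simp [this]
  have h2 : ∀ t, (if flowTransfer O f t = Sum.inr (O t) then 0 else 1) = f.2.1 t := by
    intro t
    by_cases hex : ∃ d', f.2.2 t d' = 1
    · simp only [flowTransfer, dif_pos hex]
      simp only [reduceCtorEq, if_false]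
      have hsum := hf.2.2.2.2.2.1 t
      have hle := hf.2.1 t
      have hge : 1 ≤ ∑ d, f.2.2 t d := by
        obtain ⟨d, hd⟩ := hex
        calc 1 = f.2.2 t d := hd.symm
        _ ≤ _ := Finset.single_le_sum (fun _ _ => Nat.zero_le _) (Finset.mem_univ d)
      omega
    · simp only [flowTransfer, dif_neg hex, if_pos rfl]
      have hz : ∀ d, f.2.2 t d = 0 := by
        intro d
        rcases Nat.le_one_iff_eq_zero_or_eq_one.mp (hf.2.2.1 t d) with h0 | h1
        · exact h0
        · exact absurd ⟨d, h1⟩ hex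
      rw [hf.2.2.2.2.2.1 t]
      simp [hz]
  have h1 : ∀ s, ((Finset.univ.filter fun t =>
      O t = s ∧ flowTransfer O f t ≠ Sum.inr (O t)).card) = f.1 s := by
    intro s
    rw [hf.2.2.2.2.1 s]
    rw [Finset.card_filter]
    rw [Finset.sum_filter]
    apply Finset.sum_congr rfl
    intro t _
    by_cases h : O t = s <;>
      by_cases h' : flowTransfer O f t = Sum.inr (O t) <;>
      simp [h, h', ← h2 t]
  refine Prod.ext ?_ (Prod.ext ?_ ?_) <;> funext t
  · exact h1 t
  · exact h2 t
  · funext d; exact h3 t d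

lemma flow_isTransfer (O : T → S) (A : T → Finset D) (α : S → ℕ) (β : D → ℕ)
    (f : (S → ℕ) × (T → ℕ) × (T → D → ℕ)) (hf : IsGFlow O A α β f) :
    IsTransfer O A α β (flowTransfer O f) := by
  classical
  have hkey := flowTransfer_flow O A α β f hf
  refine ⟨?_, ?_, ?_⟩
  · intro t
    by_cases hex : ∃ d', f.2.2 t d' = 1
    · left
      refine ⟨hex.choose, ?_, by simp [flowTransfer, dif_pos hex]⟩
      by_contra hd
      have := hf.2.2.2.1 t _ hd
      have := hex.choose_spec
      omega
    · right; simp [flowTransfer, dif_neg hex]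
  · intro s
    have := congrFun (congrArg Prod.fst hkey) s
    simp only [transferFlow] at this
    rw [this]
    exact hf.1 s
  · intro d
    have hc : ((Finset.univ.filter fun t => flowTransfer O f t = Sum.inl d).card)
        = ∑ t, f.2.2 t d := by
      rw [Finset.card_filter]
      apply Finset.sum_congr rfl
      intro t _
      have := congrFun (congrFun (congrArg (fun x => x.2.2) hkey) t) d
      simpa [transferFlow] using this
    rw [hc]
    exact hf.2.2.2.2.2.2 d

lemma transfer_flowTransfer (O : T → S) (A : T → Finset D) (α : S → ℕ) (β : D → ℕ)
    (σ : T → D ⊕ S) (hσ : IsTransfer O A α β σ) :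
    flowTransfer O (transferFlow O σ) = σ := by
  classical
  funext t
  rcases hσ.1 t with ⟨d, hd, hσ'⟩ | hσ'
  · have hex : ∃ d', (transferFlow O σ).2.2 t d' = 1 := ⟨d, by simp [transferFlow, hσ']⟩
    have hspec := hex.choose_spec
    have hch : σ t = Sum.inl hex.choose := by
      by_contra hne
      simp only [transferFlow] at hspec
      split_ifs at hspec with hc
      · exact hne hc
    simp only [flowTransfer, dif_pos hex]
    exact hch.symm
  · have hex : ¬ ∃ d', (transferFlow O σ).2.2 t d' = 1 := by
      rintro ⟨d', hd'⟩
      simp [transferFlow, hσ'] at hd'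
    simp [flowTransfer, dif_neg hex, hσ']

/-- Bijection between transfers and integer feasible flows in the network `G`:
every transfer induces an integer feasible flow, and the induced-flow map is a
bijection onto the set of integer feasible flows. -/

theorem transfer_flow_bijection (O : T → S) (A : T → Finset D)
    (α : S → ℕ) (β : D → ℕ)
    (hA : ∀ t, (A t).Nonempty) (hα : ∀ s, 0 < α s) (hβ : ∀ d, 0 < β d) :
    (∀ σ : T → D ⊕ S, IsTransfer O A α β σ → IsGFlow O A α β (transferFlow O σ)) ∧
    ∃ e : {σ : T → D ⊕ S // IsTransfer O A α β σ} ≃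
        {f : (S → ℕ) × (T → ℕ) × (T → D → ℕ) // IsGFlow O A α β f},
      ∀ σ, (e σ).val = transferFlow O σ.val := by
  
  classical
  refine ⟨transfer_isGFlow O A α β, ?_⟩
  refine ⟨{
    toFun := fun σ => ⟨transferFlow O σ.1, transfer_isGFlow O A α β σ.1 σ.2⟩
    invFun := fun f => ⟨flowTransfer O f.1, flow_isTransfer O A α β f.1 f.2⟩
    left_inv := fun σ => Subtype.ext (transfer_flowTransfer O A α β σ.1 σ.2)
    right_inv := fun f => Subtype.ext (flowTransfer_flow O A α β f.1 f.2) }, ?_⟩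
  intro σ
  rfl
end

section
/- In the teacher transfer problem, there exists a transfer σ* whose post-transfer deficit vector β^{σ*} Lorenz dominates (is weakly majorized by) the post-transfer deficit vector β^σ of every other transfer σ. -/
open Finset

/-- Sum of the `k` largest entries of a list of integers. -/
def topSumListZ (l : List ℤ) (k : ℕ) : ℤ :=
  ((l.insertionSort (· ≥ ·)).take k).sum

variable {S D T : Type*} [Fintype S] [Fintype D] [Fintype T]
  [DecidableEq S] [DecidableEq D] [DecidableEq T]

/-- The post-transfer deficit of deficit school `d` under transfer `σ`. -/
def postDeficit (β : D → ℕ) (σ : T → D ⊕ S) (d : D) : ℤ :=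
  (β d : ℤ) - (Finset.univ.filter fun t => σ t = Sum.inl d).card


open Finset

section ListLemmas

lemma sum_map_sub_const (l : List ℤ) (θ : ℤ) :
    (l.map (fun a => a - θ)).sum = l.sum - l.length * θ := by
  induction l with
  | nil => simp
  | cons a l ih => simp [ih]; push_cast; ring

lemma listA (w : List ℤ) (m : ℕ) (θ : ℤ) (hθ : 0 ≤ θ) :
    (w.take m).sum ≤ m * θ + (w.map (fun a => max (a - θ) 0)).sum := by
  induction w generalizing m with
  | nil => simpa using mul_nonneg (by positivity) hθ
  | cons a w ih =>
    cases m with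
    | zero =>
      simp only [List.take_zero, List.sum_nil, Nat.cast_zero, zero_mul, zero_add]
      exact List.sum_nonneg (by
        intro x hx
        obtain ⟨b, _, rfl⟩ := List.mem_map.1 hx
        exact le_max_right _ _)
    | succ m =>
      have h1 := ih m
      have h2 : a ≤ θ + max (a - θ) 0 := by
        have := le_max_left (a - θ) 0
        omega
      simp only [List.take_succ_cons, List.sum_cons, List.map_cons]
      push_cast
      linarith

lemma listB (w : List ℤ) (hs : List.Pairwise (· ≥ ·) w) (hn : ∀ a ∈ w, 0 ≤ a) (m : ℕ) :
    ∃ θ : ℤ, 0 ≤ θ ∧ (m : ℤ) * θ + (w.map (fun a => max (a - θ) 0)).sum ≤ (w.take m).sum := by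
  by_cases hm : w.length ≤ m
  · refine ⟨0, le_rfl, ?_⟩
    rw [List.take_of_length_le hm]
    have h0 : (w.map (fun a => max (a - 0) 0)).sum = w.sum := by
      rw [show w.map (fun a => max (a - 0) 0) = w.map id from
        List.map_congr_left (fun a ha => by simpa using max_eq_left (hn a ha))]
      simp
    rw [h0]
    simp
  · push_neg at hm
    set θ := w.get ⟨m, hm⟩ with hθdef
    have hθ0 : 0 ≤ θ := hn _ (List.get_mem w ⟨m, hm⟩)
    refine ⟨θ, hθ0, ?_⟩
    have hdrop : w.drop m = θ :: w.drop (m + 1) := List.drop_eq_getElem_cons hm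
    have hsplit : w = w.take m ++ w.drop m := (List.take_append_drop m w).symm
    -- cross inequality
    have hpw : List.Pairwise (· ≥ ·) (w.take m ++ w.drop m) := by rw [← hsplit]; exact hs
    have hcross : ∀ a ∈ w.take m, ∀ b ∈ w.drop m, a ≥ b := (List.pairwise_append.1 hpw).2.2
    have htake_ge : ∀ a ∈ w.take m, θ ≤ a := by
      intro a ha
      exact hcross a ha θ (by rw [hdrop]; exact List.mem_cons_self)
    have hdrop_le : ∀ b ∈ w.drop m, b ≤ θ := by
      have hds : List.Pairwise (· ≥ ·) (w.drop m) := (List.pairwise_append.1 hpw).2.1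
      rw [hdrop] at hds ⊢
      intro b hb
      rcases List.mem_cons.1 hb with rfl | hb
      · exact le_rfl
      · exact (List.pairwise_cons.1 hds).1 b hb
    have hmapsum : (w.map (fun a => max (a - θ) 0)).sum
        = ((w.take m).map (fun a => max (a - θ) 0)).sum
          + ((w.drop m).map (fun a => max (a - θ) 0)).sum := by
      rw [← List.sum_append, ← List.map_append, List.take_append_drop]
    have hdropsum : ((w.drop m).map (fun a => max (a - θ) 0)).sum = 0 := by
      apply List.sum_eq_zero
      intro x hx
      obtain ⟨b, hb, rfl⟩ := List.mem_map.1 hx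
      exact max_eq_right (by have := hdrop_le b hb; omega)
    have htakesum : ((w.take m).map (fun a => max (a - θ) 0)).sum
        = (w.take m).sum - m * θ := by
      rw [show (w.take m).map (fun a => max (a - θ) 0) = (w.take m).map (fun a => a - θ) from
        List.map_congr_left (fun a ha => max_eq_left (by have := htake_ge a ha; omega))]
      rw [sum_map_sub_const]
      have : (w.take m).length = m := by
        rw [List.length_take]; omega
      rw [this]
    rw [hmapsum, hdropsum, htakesum]
    ring_nf
    omega

end ListLemmas

def cntTT (σ : T → D ⊕ S) (d : D) : ℕ := (Finset.univ.filter fun t => σ t = Sum.inl d).card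

def lvsTT (O : T → S) (σ : T → D ⊕ S) (s : S) : ℕ :=
  (Finset.univ.filter fun t => O t = s ∧ σ t ≠ Sum.inr (O t)).card

lemma postDeficit_eq (β : D → ℕ) (σ : T → D ⊕ S) (d : D) :
    postDeficit β σ d = (β d : ℤ) - cntTT σ d := rfl

lemma cntTT_update (σ : T → D ⊕ S) (t : T) (v : D ⊕ S) (d : D) :
    cntTT (Function.update σ t v) d + (if σ t = Sum.inl d then 1 else 0)
      = cntTT σ d + (if v = Sum.inl d then 1 else 0) := by
  unfold cntTT
  rw [Finset.card_filter, Finset.card_filter,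
    ← Finset.add_sum_erase _ _ (Finset.mem_univ t),
    ← Finset.add_sum_erase _ (fun x => if σ x = Sum.inl d then 1 else 0) (Finset.mem_univ t)]
  have h1 : ∑ x ∈ Finset.univ.erase t, (if Function.update σ t v x = Sum.inl d then 1 else 0)
      = ∑ x ∈ Finset.univ.erase t, (if σ x = Sum.inl d then 1 else 0) :=
    Finset.sum_congr rfl fun x hx => by rw [Function.update_of_ne (Finset.mem_erase.1 hx).1]
  rw [h1, Function.update_self]
  omega

lemma lvsTT_update (O : T → S) (σ : T → D ⊕ S) (t : T) (v : D ⊕ S) (s : S) :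
    lvsTT O (Function.update σ t v) s + (if O t = s ∧ σ t ≠ Sum.inr (O t) then 1 else 0)
      = lvsTT O σ s + (if O t = s ∧ v ≠ Sum.inr (O t) then 1 else 0) := by
  unfold lvsTT
  rw [Finset.card_filter, Finset.card_filter,
    ← Finset.add_sum_erase _ _ (Finset.mem_univ t),
    ← Finset.add_sum_erase _ (fun x => if O x = s ∧ σ x ≠ Sum.inr (O x) then 1 else 0)
      (Finset.mem_univ t)]
  have h1 : ∑ x ∈ Finset.univ.erase t,
        (if O x = s ∧ Function.update σ t v x ≠ Sum.inr (O x) then 1 else 0)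
      = ∑ x ∈ Finset.univ.erase t, (if O x = s ∧ σ x ≠ Sum.inr (O x) then 1 else 0) :=
    Finset.sum_congr rfl fun x hx => by rw [Function.update_of_ne (Finset.mem_erase.1 hx).1]
  rw [h1, Function.update_self]
  omega

lemma sum_shift_one (g g' : D → ℤ) (d : D) (h : ∀ e, e ≠ d → g' e = g e) :
    ∑ e, g' e = (∑ e, g e) + (g' d - g d) := by
  rw [← Finset.add_sum_erase _ g' (Finset.mem_univ d),
    ← Finset.add_sum_erase _ g (Finset.mem_univ d),
    Finset.sum_congr rfl (fun e he => h e (Finset.mem_erase.1 he).1)]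
  ring

lemma sum_shift_two (g g' : D → ℤ) (d f : D) (hdf : d ≠ f)
    (h : ∀ e, e ≠ d → e ≠ f → g' e = g e) :
    ∑ e, g' e = (∑ e, g e) + (g' d - g d) + (g' f - g f) := by
  have hf : f ∈ Finset.univ.erase d := Finset.mem_erase.2 ⟨hdf.symm, Finset.mem_univ f⟩
  rw [← Finset.add_sum_erase _ g' (Finset.mem_univ d),
    ← Finset.add_sum_erase _ g (Finset.mem_univ d),
    ← Finset.add_sum_erase _ g' hf, ← Finset.add_sum_erase _ g hf,
    Finset.sum_congr rfl (fun e he => by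
      have h1 := Finset.mem_erase.1 he
      have h2 := Finset.mem_erase.1 h1.2
      exact h e h2.1 h1.1)]
  ring

lemma augTT (O : T → S) (A : T → Finset D) (α : S → ℕ) (β : D → ℕ) :
    ∀ n : ℕ, ∀ σ τ : T → D ⊕ S,
      (Finset.univ.filter fun t => σ t ≠ τ t).card ≤ n →
      IsTransfer O A α β σ → IsTransfer O A α β τ →
      ∀ d : D, cntTT σ d < cntTT τ d →
      ∃ σ' : T → D ⊕ S, IsTransfer O A α β σ' ∧ cntTT σ' d = cntTT σ d + 1 ∧
        ((∀ e, e ≠ d → cntTT σ' e = cntTT σ e) ∨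
         (∃ f, f ≠ d ∧ cntTT τ f < cntTT σ f ∧ cntTT σ' f + 1 = cntTT σ f ∧
            ∀ e, e ≠ d → e ≠ f → cntTT σ' e = cntTT σ e)) := by
  intro n
  induction n with
  | zero =>
    intro σ τ hcard hσ hτ d hd
    exfalso
    have hemp : (Finset.univ.filter fun t => σ t ≠ τ t) = ∅ :=
      Finset.card_eq_zero.1 (Nat.le_zero.1 hcard)
    have heq : ∀ t, σ t = τ t := by
      intro t
      by_contra h
      have : t ∈ (Finset.univ.filter fun t => σ t ≠ τ t) :=
        Finset.mem_filter.2 ⟨Finset.mem_univ t, h⟩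
      rw [hemp] at this
      exact absurd this (Finset.notMem_empty t)
    have : cntTT σ d = cntTT τ d := by
      unfold cntTT
      congr 1
      exact Finset.filter_congr fun t _ => by rw [heq t]
    omega
  | succ n ih =>
    intro σ τ hcard hσ hτ d hd
    have hτβ : ∀ x, cntTT τ x ≤ β x := hτ.2.2
    have hσβ : ∀ x, cntTT σ x ≤ β x := hσ.2.2
    have hns : ¬ (Finset.univ.filter fun t => τ t = Sum.inl d)
        ⊆ (Finset.univ.filter fun t => σ t = Sum.inl d) := by
      intro hsub
      have : cntTT τ d ≤ cntTT σ d := Finset.card_le_card hsub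
      omega
    obtain ⟨t, htP, htQ⟩ := Finset.not_subset.1 hns
    have hτt : τ t = Sum.inl d := (Finset.mem_filter.1 htP).2
    have hσt : σ t ≠ Sum.inl d := fun h => htQ (Finset.mem_filter.2 ⟨Finset.mem_univ _, h⟩)
    have hdA : d ∈ A t := by
      rcases hτ.1 t with ⟨d', hd', he⟩ | he
      · rw [hτt] at he
        cases he
        exact hd'
      · rw [hτt] at he; exact absurd he (by simp)
    have htdiff : t ∈ Finset.univ.filter (fun x => σ x ≠ τ x) :=
      Finset.mem_filter.2 ⟨Finset.mem_univ t, by rw [hτt]; exact hσt⟩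
    cases hcase : σ t with
    | inl d'' =>
      have hd'' : d'' ≠ d := fun h => hσt (by rw [hcase, h])
      set σ₁ := Function.update σ t (Sum.inl d) with hσ₁def
      have hσ₁t : σ₁ t = Sum.inl d := by rw [hσ₁def]; simp
      have hcnt : ∀ x, cntTT σ₁ x + (if σ t = Sum.inl x then 1 else 0)
          = cntTT σ x + (if (Sum.inl d : D ⊕ S) = Sum.inl x then 1 else 0) := by
        intro x
        have h := cntTT_update σ t (Sum.inl d) x
        rwa [← hσ₁def] at h
      have hcd : cntTT σ₁ d = cntTT σ d + 1 := by
        have h := hcnt d; rw [hcase] at h; simp [hd''] at h; omega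
      have hcd'' : cntTT σ₁ d'' + 1 = cntTT σ d'' := by
        have h := hcnt d''; rw [hcase] at h; simp [Ne.symm hd''] at h; omega
      have hce : ∀ e, e ≠ d → e ≠ d'' → cntTT σ₁ e = cntTT σ e := by
        intro e h1 h2
        have h := hcnt e; rw [hcase] at h; simp [Ne.symm h1, Ne.symm h2] at h; omega
      have hlv : ∀ s, lvsTT O σ₁ s = lvsTT O σ s := by
        intro s
        have h := lvsTT_update O σ t (Sum.inl d) s
        rw [← hσ₁def, hcase] at h
        by_cases hOs : O t = s <;> simp [hOs] at h <;> omega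
      have htr₁ : IsTransfer O A α β σ₁ := by
        refine ⟨?_, ?_, ?_⟩
        · intro t''
          by_cases h : t'' = t
          · subst h; left; exact ⟨d, hdA, hσ₁t⟩
          · rw [show σ₁ t'' = σ t'' from Function.update_of_ne h _ _]; exact hσ.1 t''
        · intro s
          show lvsTT O σ₁ s ≤ α s
          rw [hlv s]; exact hσ.2.1 s
        · intro x
          show cntTT σ₁ x ≤ β x
          by_cases h1 : x = d
          · subst h1; have := hτβ x; omega
          · by_cases h2 : x = d''
            · subst h2; have := hσβ x; omega
            · rw [hce x h1 h2]; exact hσβ x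
      by_cases hcc : cntTT τ d'' < cntTT σ d''
      · exact ⟨σ₁, htr₁, hcd, Or.inr ⟨d'', hd'', hcc, hcd'', fun e h1 h2 => hce e h1 h2⟩⟩
      · have hdiffsub : (Finset.univ.filter fun x => σ₁ x ≠ τ x)
            ⊆ (Finset.univ.filter fun x => σ x ≠ τ x).erase t := by
          intro x hx
          have hx' := (Finset.mem_filter.1 hx).2
          by_cases hxt : x = t
          · subst hxt; exact absurd (hσ₁t.trans hτt.symm) hx'
          · refine Finset.mem_erase.2 ⟨hxt, Finset.mem_filter.2 ⟨Finset.mem_univ x, ?_⟩⟩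
            rwa [show σ₁ x = σ x from Function.update_of_ne hxt _ _] at hx'
        have hcard₁ : (Finset.univ.filter fun x => σ₁ x ≠ τ x).card ≤ n := by
          have h1 := Finset.card_le_card hdiffsub
          have h2 := Finset.card_erase_of_mem htdiff
          have h3 := Finset.card_pos.2 ⟨t, htdiff⟩
          omega
        have hlt₁ : cntTT σ₁ d'' < cntTT τ d'' := by omega
        obtain ⟨σ', htr', hc', hdisj'⟩ := ih σ₁ τ hcard₁ htr₁ hτ d'' hlt₁
        rcases hdisj' with hL | ⟨f, hfd'', hcf, hcf1, hrest⟩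
        · refine ⟨σ', htr', ?_, Or.inl ?_⟩
          · rw [hL d (Ne.symm hd''), hcd]
          · intro e he
            by_cases h2 : e = d''
            · subst h2; omega
            · rw [hL e h2, hce e he h2]
        · have hfd : f ≠ d := by
            intro h; subst h; omega
          refine ⟨σ', htr', ?_, Or.inr ⟨f, hfd, ?_, ?_, ?_⟩⟩
          · rw [hrest d (Ne.symm hd'') (Ne.symm hfd), hcd]
          · have := hce f hfd hfd''; omega
          · have := hce f hfd hfd''; omega
          · intro e h1 h2
            by_cases h3 : e = d''
            · subst h3; omega
            · rw [hrest e h3 h2, hce e h1 h3]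
    | inr s₀ =>
      have hs₀ : σ t = Sum.inr (O t) := by
        rcases hσ.1 t with ⟨d', _, he⟩ | he
        · rw [hcase] at he; exact absurd he (by simp)
        · exact he
      clear hcase
      by_cases hlv0 : lvsTT O σ (O t) < α (O t)
      · -- pure augmentation
        set σ₁ := Function.update σ t (Sum.inl d) with hσ₁def
        have hσ₁t : σ₁ t = Sum.inl d := by rw [hσ₁def]; simp
        have hcd : cntTT σ₁ d = cntTT σ d + 1 := by
          have h := cntTT_update σ t (Sum.inl d) d
          rw [← hσ₁def, hs₀] at h; simp at h; omega
        have hce : ∀ e, e ≠ d → cntTT σ₁ e = cntTT σ e := by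
          intro e he
          have h := cntTT_update σ t (Sum.inl d) e
          rw [← hσ₁def, hs₀] at h; simp [Ne.symm he] at h; omega
        have htr₁ : IsTransfer O A α β σ₁ := by
          refine ⟨?_, ?_, ?_⟩
          · intro t''
            by_cases h : t'' = t
            · subst h; left; exact ⟨d, hdA, hσ₁t⟩
            · rw [show σ₁ t'' = σ t'' from Function.update_of_ne h _ _]; exact hσ.1 t''
          · intro s
            show lvsTT O σ₁ s ≤ α s
            have h := lvsTT_update O σ t (Sum.inl d) s
            rw [← hσ₁def, hs₀] at h
            have hb : lvsTT O σ s ≤ α s := hσ.2.1 s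
            by_cases hOs : O t = s
            · subst hOs; simp at h; omega
            · simp [hOs] at h; omega
          · intro x
            show cntTT σ₁ x ≤ β x
            by_cases h1 : x = d
            · subst h1; have := hτβ x; omega
            · rw [hce x h1]; exact hσβ x
        exact ⟨σ₁, htr₁, hcd, Or.inl hce⟩
      · have hlv0' : α (O t) ≤ lvsTT O σ (O t) := Nat.not_lt.1 hlv0
        have htLτ : t ∈ Finset.univ.filter (fun x => O x = O t ∧ τ x ≠ Sum.inr (O x)) :=
          Finset.mem_filter.2 ⟨Finset.mem_univ t, rfl, by rw [hτt]; simp⟩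
        have htLσ : t ∉ Finset.univ.filter (fun x => O x = O t ∧ σ x ≠ Sum.inr (O x)) :=
          fun h => ((Finset.mem_filter.1 h).2.2) hs₀
        have hnsub : ¬ (Finset.univ.filter (fun x => O x = O t ∧ σ x ≠ Sum.inr (O x)))
            ⊆ (Finset.univ.filter (fun x => O x = O t ∧ τ x ≠ Sum.inr (O x))) := by
          intro hsub
          have hsub' : (Finset.univ.filter (fun x => O x = O t ∧ σ x ≠ Sum.inr (O x)))
              ⊆ (Finset.univ.filter (fun x => O x = O t ∧ τ x ≠ Sum.inr (O x))).erase t :=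
            fun x hx => Finset.mem_erase.2 ⟨fun h => htLσ (h ▸ hx), hsub hx⟩
          have h1 := Finset.card_le_card hsub'
          have h2 := Finset.card_erase_of_mem htLτ
          have h3 := Finset.card_pos.2 ⟨t, htLτ⟩
          have h4 : lvsTT O σ (O t)
              = (Finset.univ.filter (fun x => O x = O t ∧ σ x ≠ Sum.inr (O x))).card := rfl
          have h5 : lvsTT O τ (O t)
              = (Finset.univ.filter (fun x => O x = O t ∧ τ x ≠ Sum.inr (O x))).card := rfl
          have h6 : lvsTT O τ (O t) ≤ α (O t) := hτ.2.1 (O t)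
          omega
        obtain ⟨t', ht'σ, ht'τ⟩ := Finset.not_subset.1 hnsub
        have hOt' : O t' = O t := (Finset.mem_filter.1 ht'σ).2.1
        have hσt'ne : σ t' ≠ Sum.inr (O t') := (Finset.mem_filter.1 ht'σ).2.2
        obtain ⟨e, heA, hσt'⟩ : ∃ e ∈ A t', σ t' = Sum.inl e := by
          rcases hσ.1 t' with h | h
          · exact h
          · exact absurd h hσt'ne
        have hτt' : τ t' = Sum.inr (O t') := by
          by_contra h
          exact ht'τ (Finset.mem_filter.2 ⟨Finset.mem_univ t', hOt', h⟩)
        have htt' : t' ≠ t := by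
          intro h; rw [h, hs₀] at hσt'; exact absurd hσt' (by simp)
        set σa := Function.update σ t (Sum.inl d) with hσadef
        set σ₁ := Function.update σa t' (Sum.inr (O t')) with hσ₁def
        have hσat' : σa t' = Sum.inl e := by
          rw [hσadef, Function.update_of_ne htt', hσt']
        have hσat : σa t = Sum.inl d := by rw [hσadef]; simp
        have hσ₁t : σ₁ t = Sum.inl d := by
          rw [hσ₁def, Function.update_of_ne (Ne.symm htt'), hσat]
        have hσ₁t' : σ₁ t' = Sum.inr (O t') := by rw [hσ₁def]; simp
        have hcnt : ∀ x, cntTT σ₁ x + (if e = x then 1 else 0)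
            = cntTT σ x + (if d = x then 1 else 0) := by
          intro x
          have h1 := cntTT_update σa t' (Sum.inr (O t')) x
          have h2 := cntTT_update σ t (Sum.inl d) x
          rw [← hσ₁def, hσat'] at h1
          rw [← hσadef, hs₀] at h2
          have h1' : cntTT σ₁ x + (if e = x then 1 else 0) = cntTT σa x := by
            simpa using h1
          have h2' : cntTT σa x = cntTT σ x + (if d = x then 1 else 0) := by
            simpa using h2
          rw [h1', h2']
        have hlv : ∀ s, lvsTT O σ₁ s = lvsTT O σ s := by
          intro s
          have h1 := lvsTT_update O σa t' (Sum.inr (O t')) s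
          have h2 := lvsTT_update O σ t (Sum.inl d) s
          rw [← hσ₁def, hσat'] at h1
          rw [← hσadef, hs₀] at h2
          rw [hOt'] at h1
          by_cases hOs : O t = s <;> simp [hOs] at h1 h2 <;> omega
        have htr₁ : IsTransfer O A α β σ₁ := by
          refine ⟨?_, ?_, ?_⟩
          · intro t''
            by_cases h' : t'' = t'
            · subst h'; right; rw [hσ₁t']
            · by_cases h : t'' = t
              · subst h; left; exact ⟨d, hdA, hσ₁t⟩
              · rw [show σ₁ t'' = σa t'' from Function.update_of_ne h' _ _,
                  show σa t'' = σ t'' from Function.update_of_ne h _ _]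
                exact hσ.1 t''
          · intro s
            show lvsTT O σ₁ s ≤ α s
            rw [hlv s]; exact hσ.2.1 s
          · intro x
            show cntTT σ₁ x ≤ β x
            have h1 := hcnt x
            have h2 := hσβ x
            by_cases hdx : d = x
            · subst hdx
              have h3 := hτβ d
              by_cases hex : e = d <;> simp [hex] at h1 <;> omega
            · by_cases hex : e = x <;> simp [hex, hdx] at h1 <;> omega
        have hdiffsub : (Finset.univ.filter fun x => σ₁ x ≠ τ x)
            ⊆ (Finset.univ.filter fun x => σ x ≠ τ x).erase t := by
          intro x hx
          have hx' := (Finset.mem_filter.1 hx).2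
          by_cases hxt : x = t
          · subst hxt; exact absurd (hσ₁t.trans hτt.symm) hx'
          · by_cases hxt' : x = t'
            · subst hxt'; exact absurd (hσ₁t'.trans hτt'.symm) hx'
            · refine Finset.mem_erase.2 ⟨hxt, Finset.mem_filter.2 ⟨Finset.mem_univ x, ?_⟩⟩
              rwa [show σ₁ x = σa x from Function.update_of_ne hxt' _ _,
                show σa x = σ x from Function.update_of_ne hxt _ _] at hx'
        have hcard₁ : (Finset.univ.filter fun x => σ₁ x ≠ τ x).card ≤ n := by
          have h1 := Finset.card_le_card hdiffsub
          have h2 := Finset.card_erase_of_mem htdiff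
          have h3 := Finset.card_pos.2 ⟨t, htdiff⟩
          omega
        by_cases hed : e = d
        · -- the teacher t' was assigned to d itself
          subst hed
          have hceq : ∀ x, cntTT σ₁ x = cntTT σ x := by
            intro x
            have h := hcnt x
            by_cases hx : e = x <;> simp [hx] at h <;> omega
          have hlt₁ : cntTT σ₁ e < cntTT τ e := by rw [hceq e]; exact hd
          obtain ⟨σ', htr', hc', hdisj'⟩ := ih σ₁ τ hcard₁ htr₁ hτ e hlt₁
          rcases hdisj' with hL | ⟨f, hfe, hcf, hcf1, hrest⟩
          · refine ⟨σ', htr', ?_, Or.inl ?_⟩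
            · rw [hc', hceq e]
            · intro x hx; rw [hL x hx, hceq x]
          · refine ⟨σ', htr', ?_, Or.inr ⟨f, hfe, ?_, ?_, ?_⟩⟩
            · rw [hc', hceq e]
            · have := hceq f; omega
            · have := hceq f; omega
            · intro x h1 h2; rw [hrest x h1 h2, hceq x]
        · -- e ≠ d
          have hcd : cntTT σ₁ d = cntTT σ d + 1 := by
            have h := hcnt d; simp [hed] at h; omega
          have hcee : cntTT σ₁ e + 1 = cntTT σ e := by
            have h := hcnt e; simp [Ne.symm hed] at h; omega
          have hcoth : ∀ x, x ≠ d → x ≠ e → cntTT σ₁ x = cntTT σ x := by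
            intro x h1 h2
            have h := hcnt x; simp [Ne.symm h1, Ne.symm h2] at h; omega
          by_cases hcc : cntTT τ e < cntTT σ e
          · exact ⟨σ₁, htr₁, hcd, Or.inr ⟨e, hed, hcc, hcee, fun x h1 h2 => hcoth x h1 h2⟩⟩
          · have hlt₁ : cntTT σ₁ e < cntTT τ e := by omega
            obtain ⟨σ', htr', hc', hdisj'⟩ := ih σ₁ τ hcard₁ htr₁ hτ e hlt₁
            rcases hdisj' with hL | ⟨f, hfe, hcf, hcf1, hrest⟩
            · refine ⟨σ', htr', ?_, Or.inl ?_⟩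
              · rw [hL d (Ne.symm hed), hcd]
              · intro x hx
                by_cases h3 : x = e
                · subst h3; omega
                · rw [hL x h3, hcoth x hx h3]
            · have hfd : f ≠ d := by
                intro h; subst h; omega
              refine ⟨σ', htr', ?_, Or.inr ⟨f, hfd, ?_, ?_, ?_⟩⟩
              · rw [hrest d (Ne.symm hed) (Ne.symm hfd), hcd]
              · have := hcoth f hfd hfe; omega
              · have := hcoth f hfd hfe; omega
              · intro x h1 h2
                by_cases h3 : x = e
                · subst h3; omega
                · rw [hrest x h3 h2, hcoth x h1 h3]

lemma maxp_le_of_sub_one (x θ : ℤ) : max (x - 1 - θ) 0 ≤ max (x - θ) 0 :=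
  max_le_max (by omega) le_rfl

lemma maxp_add_one_le (x θ : ℤ) : max (x + 1 - θ) 0 ≤ max (x - θ) 0 + 1 := by
  rcases le_total (x + 1 - θ) 0 with h | h
  · rw [max_eq_right h]
    have := le_max_right (x - θ) (0 : ℤ)
    omega
  · rw [max_eq_left h]
    have := le_max_left (x - θ) (0 : ℤ)
    omega

lemma maxp_succ_of_lt {x θ : ℤ} (h : x < θ) : max (x + 1 - θ) 0 = max (x - θ) 0 := by
  rw [max_eq_right (by omega), max_eq_right (by omega)]

lemma maxp_pred_of_lt {x θ : ℤ} (h : θ < x) : max (x - 1 - θ) 0 = max (x - θ) 0 - 1 := by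
  rw [max_eq_left (by omega), max_eq_left (by omega)]
  ring

lemma postDeficit_nonneg {O : T → S} {A : T → Finset D} {α : S → ℕ} {β : D → ℕ}
    {σ : T → D ⊕ S} (h : IsTransfer O A α β σ) (d : D) : 0 ≤ postDeficit β σ d := by
  have hc : cntTT σ d ≤ β d := h.2.2 d
  rw [postDeficit_eq]
  omega

lemma pd_lt {β : D → ℕ} {σ1 σ2 : T → D ⊕ S} {d : D} (h : cntTT σ1 d < cntTT σ2 d) :
    postDeficit β σ2 d < postDeficit β σ1 d := by
  rw [postDeficit_eq, postDeficit_eq]; omega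

lemma pd_eq {β : D → ℕ} {σ1 σ2 : T → D ⊕ S} {d : D} (h : cntTT σ1 d = cntTT σ2 d) :
    postDeficit β σ1 d = postDeficit β σ2 d := by
  rw [postDeficit_eq, postDeficit_eq]; omega

lemma pd_sub_one {β : D → ℕ} {σ1 σ2 : T → D ⊕ S} {d : D} (h : cntTT σ1 d = cntTT σ2 d + 1) :
    postDeficit β σ1 d = postDeficit β σ2 d - 1 := by
  rw [postDeficit_eq, postDeficit_eq]; omega

lemma pd_add_one {β : D → ℕ} {σ1 σ2 : T → D ⊕ S} {d : D} (h : cntTT σ1 d + 1 = cntTT σ2 d) :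
    postDeficit β σ1 d = postDeficit β σ2 d + 1 := by
  rw [postDeficit_eq, postDeficit_eq]; omega

lemma exists_good (O : T → S) (A : T → Finset D) (α : S → ℕ) (β : D → ℕ) :
    ∃ σs : T → D ⊕ S, IsTransfer O A α β σs ∧ ∀ θ : ℤ, 0 ≤ θ →
      ∀ τ : T → D ⊕ S, IsTransfer O A α β τ →
      (∑ d, max (postDeficit β σs d - θ) 0) ≤ ∑ d, max (postDeficit β τ d - θ) 0 := by
  classical
  have h0 : IsTransfer O A α β (fun t => Sum.inr (O t)) := by
    refine ⟨fun t => Or.inr rfl, fun s => ?_, fun d => ?_⟩ <;> simp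
  set TS : Finset (T → D ⊕ S) := Finset.univ.filter (fun σ => IsTransfer O A α β σ) with hTS
  have hmemTS : ∀ σ, IsTransfer O A α β σ → σ ∈ TS :=
    fun σ h => Finset.mem_filter.2 ⟨Finset.mem_univ _, h⟩
  have hTSne : TS.Nonempty := ⟨_, hmemTS _ h0⟩
  obtain ⟨u, huTS, humin⟩ := TS.exists_min_image (fun σ => ∑ d, (postDeficit β σ d) ^ 2) hTSne
  have hu : IsTransfer O A α β u := (Finset.mem_filter.1 huTS).2
  refine ⟨u, hu, ?_⟩
  intro θ hθ τ hτ
  obtain ⟨v₀, hv₀TS, hv₀min⟩ :=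
    TS.exists_min_image (fun σ => ∑ d, max (postDeficit β σ d - θ) 0) hTSne
  set TSμ := TS.filter (fun σ =>
    (∑ d, max (postDeficit β σ d - θ) 0) = ∑ d, max (postDeficit β v₀ d - θ) 0) with hTSμ
  obtain ⟨v, hvTSμ, hvmin⟩ := TSμ.exists_min_image
    (fun σ => ∑ d, |postDeficit β σ d - postDeficit β u d|)
    ⟨v₀, Finset.mem_filter.2 ⟨hv₀TS, rfl⟩⟩
  have hvTS : v ∈ TS := (Finset.mem_filter.1 hvTSμ).1
  have hv : IsTransfer O A α β v := (Finset.mem_filter.1 hvTS).2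
  have hψv : (∑ d, max (postDeficit β v d - θ) 0) = ∑ d, max (postDeficit β v₀ d - θ) 0 :=
    (Finset.mem_filter.1 hvTSμ).2
  have hτψ : (∑ d, max (postDeficit β v d - θ) 0) ≤ ∑ d, max (postDeficit β τ d - θ) 0 := by
    rw [hψv]; exact hv₀min τ (hmemTS τ hτ)
  suffices h : (∑ d, max (postDeficit β u d - θ) 0) ≤ ∑ d, max (postDeficit β v d - θ) 0 by
    exact h.trans hτψ
  by_contra hlt
  push_neg at hlt
  have hcontra : ∀ ρ : T → D ⊕ S, IsTransfer O A α β ρ →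
      (∑ d, max (postDeficit β ρ d - θ) 0) ≤ (∑ d, max (postDeficit β v d - θ) 0) →
      (∑ d, |postDeficit β ρ d - postDeficit β u d|)
        < (∑ d, |postDeficit β v d - postDeficit β u d|) → False := by
    intro ρ hρ h1 h2
    have h3 : (∑ d, max (postDeficit β v d - θ) 0) ≤ (∑ d, max (postDeficit β ρ d - θ) 0) := by
      rw [hψv]; exact hv₀min ρ (hmemTS ρ hρ)
    have h4 : ρ ∈ TSμ := Finset.mem_filter.2 ⟨hmemTS ρ hρ, by omega⟩
    exact absurd (hvmin ρ h4) (not_le.2 h2)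
  -- Step A : find a coordinate where v has bigger deficit than u
  have hstepA : ∃ d', cntTT v d' < cntTT u d' := by
    by_contra hno
    push_neg at hno
    have hle : ∀ d, postDeficit β v d ≤ postDeficit β u d := by
      intro d
      rw [postDeficit_eq, postDeficit_eq]
      have := hno d
      omega
    have hne : ∃ d₀, postDeficit β v d₀ < postDeficit β u d₀ := by
      by_contra hno2
      push_neg at hno2
      have heq : ∀ d, postDeficit β v d = postDeficit β u d :=
        fun d => le_antisymm (hle d) (hno2 d)
      have : (∑ d, max (postDeficit β v d - θ) 0) = ∑ d, max (postDeficit β u d - θ) 0 :=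
        Finset.sum_congr rfl fun d _ => by rw [heq d]
      omega
    obtain ⟨d₀, hd₀⟩ := hne
    have hΦ : (∑ d, (postDeficit β v d) ^ 2) < ∑ d, (postDeficit β u d) ^ 2 := by
      refine Finset.sum_lt_sum (fun d _ => ?_) ⟨d₀, Finset.mem_univ d₀, ?_⟩
      · exact pow_le_pow_left₀ (postDeficit_nonneg hv d) (hle d) 2
      · exact pow_lt_pow_left₀ hd₀ (postDeficit_nonneg hv d₀) (two_ne_zero)
    exact absurd (humin v hvTS) (not_le.2 hΦ)
  obtain ⟨d', hd'⟩ := hstepA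
  -- Step B : augment v towards u at d'
  obtain ⟨w, hwtr, hw1, hwdisj⟩ := augTT O A α β _ v u le_rfl hv hu d' hd'
  have hpdw1 : postDeficit β w d' = postDeficit β v d' - 1 := pd_sub_one hw1
  have hgt' : postDeficit β u d' < postDeficit β v d' := pd_lt hd'
  have habs1 : |postDeficit β v d' - 1 - postDeficit β u d'|
      = |postDeficit β v d' - postDeficit β u d'| - 1 := by
    rw [abs_of_nonneg (by omega), abs_of_nonneg (by omega)]
    ring
  rcases hwdisj with hL | ⟨f, hfd', hcf, hcf1, hrest⟩
  · -- pure augmentation : ψ decreases or stays, L1 strictly decreases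
    have hψeq : (∑ d, max (postDeficit β w d - θ) 0)
        = (∑ d, max (postDeficit β v d - θ) 0)
          + (max (postDeficit β w d' - θ) 0 - max (postDeficit β v d' - θ) 0) :=
      sum_shift_one _ _ d' (fun e he => by rw [pd_eq (hL e he)])
    rw [hpdw1] at hψeq
    have hψle : (∑ d, max (postDeficit β w d - θ) 0)
        ≤ ∑ d, max (postDeficit β v d - θ) 0 := by
      have := maxp_le_of_sub_one (postDeficit β v d') θ
      linarith
    have hL1eq : (∑ d, |postDeficit β w d - postDeficit β u d|)
        = (∑ d, |postDeficit β v d - postDeficit β u d|)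
          + (|postDeficit β w d' - postDeficit β u d'|
              - |postDeficit β v d' - postDeficit β u d'|) :=
      sum_shift_one _ _ d' (fun e he => by rw [pd_eq (hL e he)])
    rw [hpdw1, habs1] at hL1eq
    exact hcontra w hwtr hψle (by omega)
  · -- exchange : d' decreases, f increases
    have hpdwf : postDeficit β w f = postDeficit β v f + 1 := pd_add_one hcf1
    have hgtf : postDeficit β v f < postDeficit β u f := by
      have := pd_lt (β := β) hcf
      omega
    have habs2 : |postDeficit β v f + 1 - postDeficit β u f|
        = |postDeficit β v f - postDeficit β u f| - 1 := by
      rw [abs_of_nonpos (by omega), abs_of_nonpos (by omega)]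
      ring
    have hψeq : (∑ d, max (postDeficit β w d - θ) 0)
        = (∑ d, max (postDeficit β v d - θ) 0)
          + (max (postDeficit β w d' - θ) 0 - max (postDeficit β v d' - θ) 0)
          + (max (postDeficit β w f - θ) 0 - max (postDeficit β v f - θ) 0) :=
      sum_shift_two _ _ d' f (Ne.symm hfd') (fun e h1 h2 => by rw [pd_eq (hrest e h1 h2)])
    rw [hpdw1, hpdwf] at hψeq
    have hL1eq : (∑ d, |postDeficit β w d - postDeficit β u d|)
        = (∑ d, |postDeficit β v d - postDeficit β u d|)
          + (|postDeficit β w d' - postDeficit β u d'|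
              - |postDeficit β v d' - postDeficit β u d'|)
          + (|postDeficit β w f - postDeficit β u f|
              - |postDeficit β v f - postDeficit β u f|) :=
      sum_shift_two _ _ d' f (Ne.symm hfd') (fun e h1 h2 => by rw [pd_eq (hrest e h1 h2)])
    rw [hpdw1, hpdwf, habs1, habs2] at hL1eq
    by_cases hψle : (∑ d, max (postDeficit β w d - θ) 0)
        ≤ ∑ d, max (postDeficit β v d - θ) 0
    · exact hcontra w hwtr hψle (by omega)
    · push_neg at hψle
      -- the exchange raised ψ : v f ≥ θ and v d' ≤ θ
      have hvf : θ ≤ postDeficit β v f := by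
        by_contra hc
        push_neg at hc
        have hB := maxp_succ_of_lt (θ := θ) hc
        have hA := maxp_le_of_sub_one (postDeficit β v d') θ
        linarith
      have hvd' : postDeficit β v d' ≤ θ := by
        by_contra hc
        push_neg at hc
        have hA := maxp_pred_of_lt (θ := θ) hc
        have hB := maxp_add_one_le (postDeficit β v f) θ
        linarith
      have huf : θ + 1 ≤ postDeficit β u f := by omega
      -- Step C : augment u towards v at f
      obtain ⟨x, hxtr, hx1, hxdisj⟩ := augTT O A α β _ u v le_rfl hu hv f hcf
      have hpdxf : postDeficit β x f = postDeficit β u f - 1 := pd_sub_one hx1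
      have hΦux : (∑ d, (postDeficit β u d) ^ 2) ≤ ∑ d, (postDeficit β x d) ^ 2 :=
        humin x (hmemTS x hxtr)
      rcases hxdisj with hxL | ⟨h, hhf, hch, hxh, hxrest⟩
      · -- pure : Φ strictly decreases, contradiction
        have hΦeq : (∑ d, (postDeficit β x d) ^ 2)
            = (∑ d, (postDeficit β u d) ^ 2)
              + ((postDeficit β x f) ^ 2 - (postDeficit β u f) ^ 2) :=
          sum_shift_one _ _ f (fun e he => by rw [pd_eq (hxL e he)])
        rw [hpdxf] at hΦeq
        have e1 : (postDeficit β u f - 1) ^ 2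
            = (postDeficit β u f) ^ 2 - 2 * postDeficit β u f + 1 := by ring
        linarith [hΦeq, hΦux, huf, hθ]
      · -- exchange at u : get h with u h ≥ u f - 1 ≥ θ
        have hpdxh : postDeficit β x h = postDeficit β u h + 1 := pd_add_one hxh
        have hΦeq : (∑ d, (postDeficit β x d) ^ 2)
            = (∑ d, (postDeficit β u d) ^ 2)
              + ((postDeficit β x f) ^ 2 - (postDeficit β u f) ^ 2)
              + ((postDeficit β x h) ^ 2 - (postDeficit β u h) ^ 2) :=
          sum_shift_two _ _ f h (Ne.symm hhf) (fun e h1 h2 => by rw [pd_eq (hxrest e h1 h2)])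
        rw [hpdxf, hpdxh] at hΦeq
        have e1 : (postDeficit β u f - 1) ^ 2
            = (postDeficit β u f) ^ 2 - 2 * postDeficit β u f + 1 := by ring
        have e2 : (postDeficit β u h + 1) ^ 2
            = (postDeficit β u h) ^ 2 + 2 * postDeficit β u h + 1 := by ring
        have huh : postDeficit β u f - 1 ≤ postDeficit β u h := by linarith [hΦeq, hΦux]
        have hvh : postDeficit β u h < postDeficit β v h := pd_lt hch
        -- Step D : augment v towards u at h
        obtain ⟨w', hw'tr, hw'1, hw'disj⟩ := augTT O A α β _ v u le_rfl hv hu h hch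
        have hpdw'h : postDeficit β w' h = postDeficit β v h - 1 := pd_sub_one hw'1
        have hθvh : θ < postDeficit β v h := by omega
        have hmaxh := maxp_pred_of_lt (x := postDeficit β v h) hθvh
        have habs3 : |postDeficit β v h - 1 - postDeficit β u h|
            = |postDeficit β v h - postDeficit β u h| - 1 := by
          rw [abs_of_nonneg (by omega), abs_of_nonneg (by omega)]
          ring
        rcases hw'disj with hw'L | ⟨f', hf'h, hcf', hw'f1, hw'rest⟩
        · have hψeq' : (∑ d, max (postDeficit β w' d - θ) 0)
              = (∑ d, max (postDeficit β v d - θ) 0)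
                + (max (postDeficit β w' h - θ) 0 - max (postDeficit β v h - θ) 0) :=
            sum_shift_one _ _ h (fun e he => by rw [pd_eq (hw'L e he)])
          rw [hpdw'h] at hψeq'
          have hL1eq' : (∑ d, |postDeficit β w' d - postDeficit β u d|)
              = (∑ d, |postDeficit β v d - postDeficit β u d|)
                + (|postDeficit β w' h - postDeficit β u h|
                    - |postDeficit β v h - postDeficit β u h|) :=
            sum_shift_one _ _ h (fun e he => by rw [pd_eq (hw'L e he)])
          rw [hpdw'h, habs3] at hL1eq'
          exact hcontra w' hw'tr (by omega) (by omega)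
        · have hpdw'f' : postDeficit β w' f' = postDeficit β v f' + 1 := pd_add_one hw'f1
          have hgtf' : postDeficit β v f' < postDeficit β u f' := by
            have := pd_lt (β := β) hcf'
            omega
          have habs4 : |postDeficit β v f' + 1 - postDeficit β u f'|
              = |postDeficit β v f' - postDeficit β u f'| - 1 := by
            rw [abs_of_nonpos (by omega), abs_of_nonpos (by omega)]
            ring
          have hψeq' : (∑ d, max (postDeficit β w' d - θ) 0)
              = (∑ d, max (postDeficit β v d - θ) 0)
                + (max (postDeficit β w' h - θ) 0 - max (postDeficit β v h - θ) 0)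
                + (max (postDeficit β w' f' - θ) 0 - max (postDeficit β v f' - θ) 0) :=
            sum_shift_two _ _ h f' (Ne.symm hf'h) (fun e h1 h2 => by rw [pd_eq (hw'rest e h1 h2)])
          rw [hpdw'h, hpdw'f'] at hψeq'
          have hB' := maxp_add_one_le (postDeficit β v f') θ
          have hL1eq' : (∑ d, |postDeficit β w' d - postDeficit β u d|)
              = (∑ d, |postDeficit β v d - postDeficit β u d|)
                + (|postDeficit β w' h - postDeficit β u h|
                    - |postDeficit β v h - postDeficit β u h|)
                + (|postDeficit β w' f' - postDeficit β u f'|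
                    - |postDeficit β v f' - postDeficit β u f'|) :=
            sum_shift_two _ _ h f' (Ne.symm hf'h) (fun e h1 h2 => by rw [pd_eq (hw'rest e h1 h2)])
          rw [hpdw'h, hpdw'f', habs3, habs4] at hL1eq'
          exact hcontra w' hw'tr (by omega) (by omega)

/-- Existence of a Lorenz dominant transfer: some transfer's post-transfer
deficit vector is weakly majorized by that of every other transfer. -/
theorem exists_lorenz_dominant_transfer
    (O : T → S) (A : T → Finset D) (α : S → ℕ) (β : D → ℕ)
    (hA : ∀ t, (A t).Nonempty) (hα : ∀ s, 0 < α s) (hβ : ∀ d, 0 < β d) :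
    ∃ σstar : T → D ⊕ S, IsTransfer O A α β σstar ∧
      ∀ σ : T → D ⊕ S, IsTransfer O A α β σ → ∀ m : ℕ,
        topSumListZ (Finset.univ.toList.map (postDeficit β σstar)) m ≤
          topSumListZ (Finset.univ.toList.map (postDeficit β σ)) m := by
  obtain ⟨σstar, hstar, hψ⟩ := exists_good O A α β
  refine ⟨σstar, hstar, ?_⟩
  intro σ hσ m
  set l1 := Finset.univ.toList.map (postDeficit β σstar) with hl1
  set l2 := Finset.univ.toList.map (postDeficit β σ) with hl2
  set w := l2.insertionSort (· ≥ ·) with hw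
  have hwsorted : List.Pairwise (· ≥ ·) w := List.pairwise_insertionSort _ _
  have hwperm : w.Perm l2 := List.perm_insertionSort _ _
  have hl2nonneg : ∀ a ∈ l2, 0 ≤ a := by
    intro a ha
    rw [hl2] at ha
    obtain ⟨d, _, rfl⟩ := List.mem_map.1 ha
    exact postDeficit_nonneg hσ d
  have hwnonneg : ∀ a ∈ w, 0 ≤ a := fun a ha => hl2nonneg a (hwperm.mem_iff.1 ha)
  obtain ⟨θ, hθ0, hθB⟩ := listB w hwsorted hwnonneg m
  have hAA := listA (l1.insertionSort (· ≥ ·)) m θ hθ0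
  have hsum1 : ((l1.insertionSort (· ≥ ·)).map (fun a => max (a - θ) 0)).sum
      = ∑ d, max (postDeficit β σstar d - θ) 0 := by
    rw [List.Perm.sum_eq ((List.perm_insertionSort _ l1).map _), hl1, List.map_map]
    exact Finset.sum_map_toList _ _
  have hsum2 : (w.map (fun a => max (a - θ) 0)).sum = ∑ d, max (postDeficit β σ d - θ) 0 := by
    rw [List.Perm.sum_eq (hwperm.map _), hl2, List.map_map]
    exact Finset.sum_map_toList _ _
  calc topSumListZ l1 m
      ≤ m * θ + ((l1.insertionSort (· ≥ ·)).map (fun a => max (a - θ) 0)).sum := hAA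
    _ = m * θ + ∑ d, max (postDeficit β σstar d - θ) 0 := by rw [hsum1]
    _ ≤ m * θ + ∑ d, max (postDeficit β σ d - θ) 0 := by
        have := hψ θ hθ0 σ hσ
        linarith
    _ = m * θ + (w.map (fun a => max (a - θ) 0)).sum := by rw [hsum2]
    _ ≤ (w.take m).sum := hθB
    _ = topSumListZ l2 m := rfl
end

section
/- Any transfer whose post-transfer deficit vector Lorenz dominates all achievable post-transfer deficit vectors corresponds to an integral maximum flow in the associated network; in particular, it maximizes the total number of teachers transferred. -/
open Finset

variable {S D T : Type*} [Fintype S] [Fintype D] [Fintype T]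
  [DecidableEq S] [DecidableEq D] [DecidableEq T]

/-- A Lorenz dominant transfer corresponds to an integral maximum flow: it
minimizes the aggregate post-transfer deficit over all transfers (equivalently,
maximizes the number of teachers transferred), and its induced integer flow has
maximal value among all integer feasible flows in `G`. -/
theorem lorenz_dominant_is_maximum_flow
    (O : T → S) (A : T → Finset D) (α : S → ℕ) (β : D → ℕ)
    (hA : ∀ t, (A t).Nonempty) (hα : ∀ s, 0 < α s) (hβ : ∀ d, 0 < β d)
    (σstar : T → D ⊕ S) (hstar : IsTransfer O A α β σstar)
    (hLD : ∀ σ : T → D ⊕ S, IsTransfer O A α β σ → ∀ m : ℕ,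
      topSumListZ (Finset.univ.toList.map (postDeficit β σstar)) m ≤
        topSumListZ (Finset.univ.toList.map (postDeficit β σ)) m) :
    (∀ σ : T → D ⊕ S, IsTransfer O A α β σ →
      ∑ d, postDeficit β σstar d ≤ ∑ d, postDeficit β σ d) ∧
    (∀ f : (S → ℕ) × (T → ℕ) × (T → D → ℕ), IsGFlow O A α β f →
      ∑ t, ∑ d, f.2.2 t d ≤ ∑ t, ∑ d, (transferFlow O σstar).2.2 t d) := by
  classical
  -- full-length top sum equals the total sum
  have efull : ∀ τ : T → D ⊕ S,
      topSumListZ (Finset.univ.toList.map (postDeficit β τ))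
        (Finset.univ.toList (α := D)).length = ∑ d, postDeficit β τ d := by
    intro τ
    unfold topSumListZ
    set l := Finset.univ.toList.map (postDeficit β τ) with hl
    have hp : (l.insertionSort (· ≥ ·)).Perm l := List.perm_insertionSort _ _
    rw [List.take_of_length_le (by rw [hp.length_eq, hl, List.length_map]),
      hp.sum_eq, hl, Finset.sum_map_toList]
  have key : ∀ σ : T → D ⊕ S, IsTransfer O A α β σ →
      ∑ d, postDeficit β σstar d ≤ ∑ d, postDeficit β σ d := by
    intro σ hσ
    have h := hLD σ hσ (Finset.univ.toList (α := D)).length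
    rwa [efull, efull] at h
  refine ⟨key, ?_⟩
  -- the flow value of `transferFlow σ` in terms of deficits
  have flowval : ∀ τ : T → D ⊕ S,
      ((∑ t, ∑ d, (transferFlow O τ).2.2 t d : ℕ) : ℤ)
        = ∑ d, (β d : ℤ) - ∑ d, postDeficit β τ d := by
    intro τ
    have h1 : ∑ t, ∑ d, (transferFlow O τ).2.2 t d
        = ∑ d, (Finset.univ.filter fun t => τ t = Sum.inl d).card := by
      rw [Finset.sum_comm]
      refine Finset.sum_congr rfl fun d _ => ?_
      simp [transferFlow, Finset.sum_boole]
    rw [h1]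
    push_cast
    simp [postDeficit, Finset.sum_sub_distrib]
  intro f hf
  obtain ⟨h1, h2, h3, h4, h5, h6, h7⟩ := hf
  -- build a transfer from the flow
  set σf : T → D ⊕ S := fun t =>
    if h : ∃ d, f.2.2 t d = 1 then Sum.inl h.choose else Sum.inr (O t) with hσf
  have hone : ∀ t d, f.2.2 t d = 1 → f.2.1 t = 1 := by
    intro t d hd
    refine le_antisymm (h2 t) ?_
    rw [h6 t]
    calc 1 = f.2.2 t d := hd.symm
    _ ≤ ∑ d', f.2.2 t d' := Finset.single_le_sum (fun _ _ => Nat.zero_le _) (Finset.mem_univ d)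
  have huniq : ∀ t d, σf t = Sum.inl d ↔ f.2.2 t d = 1 := by
    intro t d
    constructor
    · intro hh
      by_cases h : ∃ d', f.2.2 t d' = 1
      · rw [hσf] at hh
        simp only [dif_pos h, Sum.inl.injEq] at hh
        rw [← hh]
        exact h.choose_spec
      · rw [hσf] at hh; simp [dif_neg h] at hh
    · intro hd
      have h : ∃ d', f.2.2 t d' = 1 := ⟨d, hd⟩
      rw [hσf]
      simp only [dif_pos h, Sum.inl.injEq]
      by_contra hne
      have hc := h.choose_spec
      have : (2 : ℕ) ≤ ∑ d', f.2.2 t d' := by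
        have hsub : ({h.choose, d} : Finset D) ⊆ Finset.univ := Finset.subset_univ _
        calc (2 : ℕ) = f.2.2 t h.choose + f.2.2 t d := by rw [hc, hd]
        _ = ∑ d' ∈ ({h.choose, d} : Finset D), f.2.2 t d' := (Finset.sum_pair hne).symm
        _ ≤ ∑ d', f.2.2 t d' := Finset.sum_le_sum_of_subset hsub
      rw [← h6 t] at this
      have := le_trans this (h2 t)
      omega
  have hnotinr : ∀ t, σf t ≠ Sum.inr (O t) ↔ ∃ d, f.2.2 t d = 1 := by
    intro t
    constructor
    · intro hh
      by_contra h
      rw [hσf] at hh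
      simp [dif_neg h] at hh
    · intro h
      rw [hσf]
      simp [dif_pos h]
  have hTf : IsTransfer O A α β σf := by
    refine ⟨?_, ?_, ?_⟩
    · intro t
      by_cases h : ∃ d, f.2.2 t d = 1
      · left
        refine ⟨h.choose, ?_, by rw [hσf]; simp [dif_pos h]⟩
        by_contra hmem
        have := h4 t h.choose hmem
        have hc := h.choose_spec
        omega
      · right; rw [hσf]; simp [dif_neg h]
    · intro s
      have hcard : (Finset.univ.filter fun t => O t = s ∧ σf t ≠ Sum.inr (O t)).card
          = ∑ t ∈ Finset.univ.filter fun t => O t = s ∧ σf t ≠ Sum.inr (O t), f.2.1 t := by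
        rw [Finset.card_eq_sum_ones]
        refine Finset.sum_congr rfl fun t ht => ?_
        rw [Finset.mem_filter] at ht
        obtain ⟨d, hd⟩ := (hnotinr t).1 ht.2.2
        exact (hone t d hd).symm
      calc (Finset.univ.filter fun t => O t = s ∧ σf t ≠ Sum.inr (O t)).card
          = ∑ t ∈ Finset.univ.filter fun t => O t = s ∧ σf t ≠ Sum.inr (O t), f.2.1 t := hcard
        _ ≤ ∑ t ∈ Finset.univ.filter fun t => O t = s, f.2.1 t := by
            refine Finset.sum_le_sum_of_subset ?_
            intro t ht
            rw [Finset.mem_filter] at ht ⊢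
            exact ⟨ht.1, ht.2.1⟩
        _ = f.1 s := (h5 s).symm
        _ ≤ α s := h1 s
    · intro d
      have : (Finset.univ.filter fun t => σf t = Sum.inl d).card = ∑ t, f.2.2 t d := by
        rw [Finset.card_eq_sum_ones]
        rw [Finset.sum_filter]
        refine Finset.sum_congr rfl fun t _ => ?_
        by_cases h : σf t = Sum.inl d
        · rw [if_pos h, ((huniq t d).1 h)]
        · rw [if_neg h]
          have := h3 t d
          have hne : f.2.2 t d ≠ 1 := fun hc => h ((huniq t d).2 hc)
          omega
      rw [this]
      exact h7 d
  -- the flow f equals transferFlow σf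
  have hfeq : ∑ t, ∑ d, f.2.2 t d = ∑ t, ∑ d, (transferFlow O σf).2.2 t d := by
    refine Finset.sum_congr rfl fun t _ => Finset.sum_congr rfl fun d _ => ?_
    simp only [transferFlow]
    by_cases h : σf t = Sum.inl d
    · rw [if_pos h, (huniq t d).1 h]
    · rw [if_neg h]
      have := h3 t d
      have hne : f.2.2 t d ≠ 1 := fun hc => h ((huniq t d).2 hc)
      omega
  rw [hfeq]
  have hz : ((∑ t, ∑ d, (transferFlow O σf).2.2 t d : ℕ) : ℤ)
      ≤ ((∑ t, ∑ d, (transferFlow O σstar).2.2 t d : ℕ) : ℤ) := by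
    rw [flowval, flowval]
    have := key σf hTf
    linarith
  exact_mod_cast hz
end

section
/- The Lorenz dominant transfer mechanism with fixed tie-breaking is strategy-proof: if under truthful report A(t_j) teacher t_j is not transferred (assigned O(t_j)), then for every misreport B ⊆ D, the school assigned to t_j under report (B, A(t_{-j})) is not in A(t_j). -/
open Finset

variable {S D T : Type*} [Fintype S] [Fintype D] [Fintype T]
  [DecidableEq S] [DecidableEq D] [DecidableEq T]

/-- `σ` is a Lorenz dominant transfer at the profile `A`: it is a transfer whose
post-transfer deficit vector is weakly majorized by that of every transfer. -/
def LorenzOpt (O : T → S) (α : S → ℕ) (β : D → ℕ) (A : T → Finset D)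
    (σ : T → D ⊕ S) : Prop :=
  IsTransfer O A α β σ ∧
    ∀ σ' : T → D ⊕ S, IsTransfer O A α β σ' → ∀ m : ℕ,
      topSumListZ (Finset.univ.toList.map (postDeficit β σ)) m ≤
        topSumListZ (Finset.univ.toList.map (postDeficit β σ')) m

/-- Strategy-proofness of the Lorenz dominant transfer mechanism with a fixed
tie-breaking order `r`: if under the truthful report teacher `t0` stays at her
initial school, then no misreport `B` gets her assigned to a school in her true
acceptable set `A t0`. -/
theorem ldt_strategyproof
    (O : T → S) (α : S → ℕ) (β : D → ℕ)
    (r : LinearOrder (T → D ⊕ S))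
    (LDT : (T → Finset D) → (T → D ⊕ S))
    (hopt : ∀ A : T → Finset D, LorenzOpt O α β A (LDT A))
    (hmax : ∀ (A : T → Finset D) (σ : T → D ⊕ S),
      LorenzOpt O α β A σ → σ ≠ LDT A → r.lt σ (LDT A))
    (t0 : T) (A : T → Finset D)
    (htruth : LDT A t0 = Sum.inr (O t0)) :
    ∀ B : Finset D, ∀ d ∈ A t0,
      LDT (Function.update A t0 B) t0 ≠ Sum.inl d := by
  intro B d hd hcon
  set A' := Function.update A t0 B with hA'
  set σ := LDT A' with hσ
  set τ := LDT A with hτ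
  have hoptσ := hopt A'
  have hoptτ := hopt A
  -- σ is a transfer at A
  have hσA : IsTransfer O A α β σ := by
    obtain ⟨h1, h2, h3⟩ := hoptσ.1
    refine ⟨fun t => ?_, h2, h3⟩
    by_cases ht : t = t0
    · subst ht; exact Or.inl ⟨d, hd, hcon⟩
    · have := h1 t
      rwa [hA', Function.update_of_ne ht] at this
  -- τ is a transfer at A'
  have hτA' : IsTransfer O A' α β τ := by
    obtain ⟨h1, h2, h3⟩ := hoptτ.1
    refine ⟨fun t => ?_, h2, h3⟩
    by_cases ht : t = t0
    · subst ht; exact Or.inr htruth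
    · have := h1 t
      rwa [hA', Function.update_of_ne ht]
  -- their top sums coincide
  have hle1 : ∀ m, topSumListZ (Finset.univ.toList.map (postDeficit β σ)) m ≤
      topSumListZ (Finset.univ.toList.map (postDeficit β τ)) m :=
    fun m => hoptσ.2 τ hτA' m
  have hle2 : ∀ m, topSumListZ (Finset.univ.toList.map (postDeficit β τ)) m ≤
      topSumListZ (Finset.univ.toList.map (postDeficit β σ)) m :=
    fun m => hoptτ.2 σ hσA m
  -- σ is Lorenz optimal at A
  have hσopt : LorenzOpt O α β A σ :=
    ⟨hσA, fun σ'' h'' m => le_trans (hle1 m) (hoptτ.2 σ'' h'' m)⟩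
  -- τ is Lorenz optimal at A'
  have hτopt : LorenzOpt O α β A' τ :=
    ⟨hτA', fun σ'' h'' m => le_trans (hle2 m) (hoptσ.2 σ'' h'' m)⟩
  have hne : σ ≠ τ := by
    intro h
    have : (Sum.inl d : D ⊕ S) = Sum.inr (O t0) := by
      rw [← hcon, ← htruth, h]
    exact Sum.inl_ne_inr this
  have l1 : r.lt σ τ := hmax A σ hσopt hne
  have l2 : r.lt τ σ := hmax A' τ hτopt (Ne.symm hne)
  letI := r; exact absurd l2 (lt_asymm l1)
end

section
/- Let w : 2^D → ℝ be supermodular with w(∅)=0 and let (D_1,...,D_K) be any MDR greedy partition. Then for any subsets B_1 ⊆ D_1, ..., B_K ⊆ D_K (possibly empty), with B = B_1 ∪ ... ∪ B_K and B̄_j = B_1 ∪ ... ∪ B_j, supermodularity gives w(D̄_{j-1} ∪ B_j) − w(D̄_{j-1}) ≥ w(B̄_j) − w(B̄_{j-1}) for each j, and hence Σ_j [w(D̄_{j-1} ∪ B_j) − w(D̄_{j-1})] ≥ w(B). -/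
open Finset

/-- For a supermodular `w` with `w ∅ = 0` and an MDR greedy partition
`(D_1,…,D_K)` with `D̄_j = D_1 ∪ … ∪ D_j`, for any subsets `B_j ⊆ D_j` with
`B̄_j = B_1 ∪ … ∪ B_j` and `B = B̄_K`, supermodularity gives
`w(D̄_{j-1} ∪ B_j) − w(D̄_{j-1}) ≥ w(B̄_j) − w(B̄_{j-1})` for each `j`,
and hence `Σ_j [w(D̄_{j-1} ∪ B_j) − w(D̄_{j-1})] ≥ w(B)`. -/
theorem supermodular_chain_inequality
    {D : Type*} [Fintype D] [DecidableEq D]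
    (K : ℕ) (w : Finset D → ℝ) (hw0 : w ∅ = 0)
    (hsuper : ∀ X' X Y : Finset D, X' ⊆ X → Disjoint Y X →
      w (X' ∪ Y) - w X' ≤ w (X ∪ Y) - w X)
    (Dk : ℕ → Finset D) (Dbar : ℕ → Finset D)
    (hDbar : ∀ k, Dbar k = (Finset.range k).biUnion Dk)
    (hne : ∀ k < K, (Dk k).Nonempty)
    (hdisj : ∀ k < K, Disjoint (Dk k) (Dbar k))
    (hgreedy : ∀ k < K, ∀ B : Finset D, B.Nonempty → Disjoint B (Dbar k) →
      (w (Dbar k ∪ B) - w (Dbar k)) / (B.card : ℝ) ≤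
        (w (Dbar (k + 1)) - w (Dbar k)) / ((Dk k).card : ℝ))
    (Bk : ℕ → Finset D) (hBk : ∀ j < K, Bk j ⊆ Dk j)
    (Bbar : ℕ → Finset D)
    (hBbar : ∀ j, Bbar j = (Finset.range j).biUnion Bk) :
    (∀ j < K, w (Bbar (j + 1)) - w (Bbar j) ≤ w (Dbar j ∪ Bk j) - w (Dbar j)) ∧
    w (Bbar K) ≤ ∑ j ∈ Finset.range K, (w (Dbar j ∪ Bk j) - w (Dbar j)) := by
  have hsub : ∀ j ≤ K, Bbar j ⊆ Dbar j := by
    intro j hj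
    rw [hBbar, hDbar]
    apply Finset.biUnion_subset.2
    intro i hi
    exact (hBk i (lt_of_lt_of_le (Finset.mem_range.1 hi) hj)).trans
      (Finset.subset_biUnion_of_mem Dk hi)
  have hstep : ∀ j < K, w (Bbar (j + 1)) - w (Bbar j) ≤ w (Dbar j ∪ Bk j) - w (Dbar j) := by
    intro j hj
    have hdj : Disjoint (Bk j) (Dbar j) :=
      Finset.disjoint_of_subset_left (hBk j hj) (hdisj j hj)
    have hB1 : Bbar (j + 1) = Bbar j ∪ Bk j := by
      rw [hBbar, hBbar, Finset.range_add_one, Finset.biUnion_insert, Finset.union_comm]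
    rw [hB1]
    exact hsuper (Bbar j) (Dbar j) (Bk j) (hsub j hj.le) hdj
  refine ⟨hstep, ?_⟩
  have htel : ∑ j ∈ Finset.range K, (w (Bbar (j + 1)) - w (Bbar j)) = w (Bbar K) := by
    rw [Finset.sum_range_sub (fun i => w (Bbar i))]
    simp [hBbar, hw0]
  calc w (Bbar K) = ∑ j ∈ Finset.range K, (w (Bbar (j + 1)) - w (Bbar j)) := htel.symm
    _ ≤ ∑ j ∈ Finset.range K, (w (Dbar j ∪ Bk j) - w (Dbar j)) :=
      Finset.sum_le_sum fun j hj => hstep j (Finset.mem_range.1 hj)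
end

section
/- Let w : 2^D → ℝ and suppose at some greedy step the set D_k is chosen to maximize the average marginal contribution over subsets of D \ D̄_{k-1}, and D_k ∪ D_{k+1} was a feasible alternative. Then |D_{k+1}|(w(D̄_k) − w(D̄_{k-1})) ≥ |D_k|(w(D̄_{k+1}) − w(D̄_k)). -/
open Finset

lemma dbar_succ {D : Type*} [DecidableEq D] (Dk Dbar : ℕ → Finset D)
    (hDbar : ∀ k, Dbar k = (Finset.range k).biUnion Dk) (k : ℕ) :
    Dbar (k + 1) = Dbar k ∪ Dk k := by
  rw [hDbar, hDbar, Finset.range_add_one, Finset.biUnion_insert, Finset.union_comm]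

/-- If at greedy step `k` the block `D_k` maximizes the average marginal
contribution over subsets disjoint from `D̄_{k-1}`, and `D_k ∪ D_{k+1}` was a
feasible alternative, then
`|D_{k+1}|·(w(D̄_k) − w(D̄_{k-1})) ≥ |D_k|·(w(D̄_{k+1}) − w(D̄_k))`. -/
theorem greedy_step_inequality
    {D : Type*} [Fintype D] [DecidableEq D]
    (w : Finset D → ℝ) (hw0 : w ∅ = 0)
    (Dk : ℕ → Finset D) (Dbar : ℕ → Finset D)
    (hDbar : ∀ k, Dbar k = (Finset.range k).biUnion Dk)
    (k : ℕ)
    (hne : (Dk k).Nonempty) (hne' : (Dk (k + 1)).Nonempty)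
    (hdisj : Disjoint (Dk k) (Dbar k))
    (hdisj' : Disjoint (Dk (k + 1)) (Dbar (k + 1)))
    (hgreedy : ∀ B : Finset D, B.Nonempty → Disjoint B (Dbar k) →
      (w (Dbar k ∪ B) - w (Dbar k)) / (B.card : ℝ) ≤
        (w (Dbar (k + 1)) - w (Dbar k)) / ((Dk k).card : ℝ)) :
    ((Dk k).card : ℝ) * (w (Dbar (k + 2)) - w (Dbar (k + 1))) ≤
      ((Dk (k + 1)).card : ℝ) * (w (Dbar (k + 1)) - w (Dbar k)) := by
  have h1 : Dbar (k + 1) = Dbar k ∪ Dk k := dbar_succ Dk Dbar hDbar k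
  have h2 : Dbar (k + 2) = Dbar (k + 1) ∪ Dk (k + 1) := dbar_succ Dk Dbar hDbar (k + 1)
  -- Dk (k+1) disjoint from Dbar k and from Dk k
  have hsub : Dbar k ⊆ Dbar (k + 1) := by rw [h1]; exact Finset.subset_union_left
  have hdA : Disjoint (Dk (k + 1)) (Dbar k) := hdisj'.mono_right hsub
  have hdB : Disjoint (Dk (k + 1)) (Dk k) := by
    refine hdisj'.mono_right ?_
    rw [h1]; exact Finset.subset_union_right
  set B := Dk k ∪ Dk (k + 1) with hB
  have hBne : B.Nonempty := hne.mono Finset.subset_union_left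
  have hBdisj : Disjoint B (Dbar k) := Finset.disjoint_union_left.mpr ⟨hdisj, hdA⟩
  have hBcard : (B.card : ℝ) = (Dk k).card + (Dk (k + 1)).card := by
    rw [hB, Finset.card_union_of_disjoint hdB.symm]; push_cast; ring
  have hBunion : Dbar k ∪ B = Dbar (k + 2) := by
    rw [h2, h1, hB, Finset.union_assoc]
  have key := hgreedy B hBne hBdisj
  rw [hBunion, hBcard] at key
  have ha : (0:ℝ) < ((Dk k).card : ℝ) := by exact_mod_cast Finset.card_pos.mpr hne
  have hb : (0:ℝ) < ((Dk (k + 1)).card : ℝ) := by exact_mod_cast Finset.card_pos.mpr hne'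
  set a := ((Dk k).card : ℝ)
  set b := ((Dk (k + 1)).card : ℝ)
  rw [div_le_div_iff₀ (by linarith) ha] at key
  nlinarith [key]
end

section
/- Let h* ∈ ℝ^D, constant on each block of a partition (D_1,...,D_K) with block values nonincreasing in k, satisfy h*(D̄_j) = w(D̄_j) for all j. Let h ∈ ℝ^D satisfy h(B) ≥ w(B) for all B ⊆ D. Then for any m whose m-th largest component of h* lies in block D_j, writing m = |D̄_{j-1}| + m′ with 0 ≤ m′ ≤ |D_j|: Σ_{i=1}^m h*_[i] ≤ h(D̄_{j-1}) + m′ · h(D_j)/|D_j|. -/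
open Finset

/-- Sum of the `k` largest entries of a list of reals. -/
noncomputable def topSumList (l : List ℝ) (k : ℕ) : ℝ :=
  ((l.insertionSort (· ≥ ·)).take k).sum

/-- CVaR-style upper bound on the top-k sum. -/
lemma topSumList_le (l : List ℝ) (k : ℕ) (hk : k ≤ l.length) (θ : ℝ) :
    topSumList l k ≤ k * θ + (l.map (fun x => max (x - θ) 0)).sum := by
  set S := l.insertionSort (· ≥ ·) with hS
  have hperm : S.Perm l := List.perm_insertionSort _ l
  have hlen : S.length = l.length := hperm.length_eq
  have htk : (S.take k).length = k := by
    rw [List.length_take, hlen]; omega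
  have step1 : (S.take k).sum ≤ ((S.take k).map (fun x => θ + max (x - θ) 0)).sum := by
    have : (S.take k).sum = ((S.take k).map id).sum := by simp
    rw [this]
    apply List.sum_le_sum
    intro x _
    simp only [id]
    rcases le_total x θ with hx | hx
    · have : max (x - θ) 0 = 0 := by simp [sub_nonpos.mpr hx]
      rw [this]; linarith
    · have : max (x - θ) 0 = x - θ := by simp [sub_nonneg.mpr hx]
      rw [this]; linarith
  have step2 : ((S.take k).map (fun x => θ + max (x - θ) 0)).sum
      = k * θ + ((S.take k).map (fun x => max (x - θ) 0)).sum := by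
    rw [List.sum_map_add]
    simp only [List.map_const', List.sum_replicate, htk, smul_eq_mul]
    ring
  have step3 : ((S.take k).map (fun x => max (x - θ) 0)).sum
      ≤ (S.map (fun x => max (x - θ) 0)).sum := by
    conv_rhs => rw [← List.take_append_drop k S]
    rw [List.map_append, List.sum_append]
    have : 0 ≤ ((S.drop k).map (fun x => max (x - θ) 0)).sum := by
      apply List.sum_nonneg
      intro x hx
      simp only [List.mem_map] at hx
      obtain ⟨y, _, rfl⟩ := hx
      exact le_max_right _ _
    linarith
  have step4 : (S.map (fun x => max (x - θ) 0)).sum = (l.map (fun x => max (x - θ) 0)).sum :=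
    (hperm.map _).sum_eq
  calc topSumList l k = (S.take k).sum := rfl
    _ ≤ _ := step1
    _ = _ := step2
    _ ≤ k * θ + (l.map (fun x => max (x - θ) 0)).sum := by linarith

/-- Partial-sum bound: if `h*` is constant on each block of a partition with
block values nonincreasing and binding constraints `h*(D̄_j) = w(D̄_j)`, and `h`
satisfies `h(B) ≥ w(B)` for all `B`, then for `m = |D̄_{j-1}| + m'` with
`m' ≤ |D_j|`, the sum of the `m` largest components of `h*` is at most
`h(D̄_{j-1}) + m' · h(D_j)/|D_j|`. -/
theorem mdr_partial_sum_bound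
    {D : Type*} [Fintype D] [DecidableEq D]
    (K : ℕ) (w : Finset D → ℝ) (hw0 : w ∅ = 0)
    (Dk : ℕ → Finset D) (Dbar : ℕ → Finset D)
    (hDbar : ∀ k, Dbar k = (Finset.range k).biUnion Dk)
    (hne : ∀ k < K, (Dk k).Nonempty)
    (hdisj : ∀ k < K, Disjoint (Dk k) (Dbar k))
    (hcover : Dbar K = Finset.univ)
    (hstar : D → ℝ) (c : ℕ → ℝ)
    (hconst : ∀ k < K, ∀ i ∈ Dk k, hstar i = c k)
    (hmono : ∀ k, k + 1 < K → c (k + 1) ≤ c k)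
    (hbind : ∀ j ≤ K, ∑ i ∈ Dbar j, hstar i = w (Dbar j))
    (h : D → ℝ) (hcore : ∀ B : Finset D, w B ≤ ∑ i ∈ B, h i) :
    ∀ j < K, ∀ m' : ℕ, m' ≤ (Dk j).card →
      topSumList (Finset.univ.toList.map hstar) ((Dbar j).card + m') ≤
        (∑ i ∈ Dbar j, h i) +
          (m' : ℝ) * (∑ i ∈ Dk j, h i) / ((Dk j).card : ℝ) := by
  -- monotonicity of block values
  have cmono : ∀ b, b < K → ∀ a, a ≤ b → c b ≤ c a := by
    intro b
    induction b with
    | zero => intro _ a ha; simp [Nat.le_zero.mp ha]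
    | succ b ih =>
      intro hbK a ha
      rcases Nat.eq_or_lt_of_le ha with rfl | hlt
      · exact le_refl _
      · exact le_trans (hmono b hbK) (ih (by omega) a (by omega))
  intro j hj m' hm'
  set n := (Dk j).card with hn_def
  have hn : 0 < n := (hne j hj).card_pos
  have hdj : Disjoint (Dk j) (Dbar j) := hdisj j hj
  have hsucc : Dbar (j+1) = Dbar j ∪ Dk j := by
    rw [hDbar, hDbar, Finset.range_add_one, Finset.biUnion_insert, union_comm]
  have hcard : (Dbar j).card + m' ≤ (Finset.univ.toList.map hstar).length := by
    rw [List.length_map, Finset.length_toList]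
    have h1 : (Dbar j).card + m' ≤ (Dbar (j+1)).card := by
      rw [hsucc, Finset.card_union_of_disjoint hdj.symm]; omega
    have h2 := Finset.card_le_card (Finset.subset_univ (Dbar (j+1)))
    omega
  have hmemout : ∀ i : D, i ∉ Dbar j → hstar i ≤ c j := by
    intro i hi
    have hiK : i ∈ Dbar K := by rw [hcover]; exact mem_univ i
    rw [hDbar] at hiK
    obtain ⟨k, hkK, hik⟩ := Finset.mem_biUnion.mp hiK
    rw [Finset.mem_range] at hkK
    have hjk : j ≤ k := by
      by_contra hcon; push_neg at hcon
      exact hi (by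
        rw [hDbar]
        exact Finset.mem_biUnion.mpr ⟨k, Finset.mem_range.mpr hcon, hik⟩)
    rw [hconst k hkK i hik]
    exact cmono k hkK j hjk
  have hmemin : ∀ i ∈ Dbar j, c j ≤ hstar i := by
    intro i hi
    rw [hDbar] at hi
    obtain ⟨k, hk, hik⟩ := Finset.mem_biUnion.mp hi
    rw [Finset.mem_range] at hk
    rw [hconst k (hk.trans hj) i hik]
    exact cmono j hj k hk.le
  -- the positive-part sum
  have hsum : ∑ i ∈ Finset.univ, max (hstar i - c j) 0
      = ∑ i ∈ Dbar j, (hstar i - c j) := by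
    rw [← Finset.sum_sdiff (Finset.subset_univ (Dbar j))]
    have z1 : ∑ i ∈ Finset.univ \ Dbar j, max (hstar i - c j) 0 = 0 := by
      apply Finset.sum_eq_zero
      intro i hi
      rw [Finset.mem_sdiff] at hi
      simp [sub_nonpos.mpr (hmemout i hi.2)]
    have z2 : ∑ i ∈ Dbar j, max (hstar i - c j) 0 = ∑ i ∈ Dbar j, (hstar i - c j) := by
      apply Finset.sum_congr rfl
      intro i hi
      simp [sub_nonneg.mpr (hmemin i hi)]
    rw [z1, z2, zero_add]
  have key := topSumList_le (Finset.univ.toList.map hstar) ((Dbar j).card + m') hcard (c j)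
  have hmapsum : ((Finset.univ.toList.map hstar).map (fun x => max (x - c j) 0)).sum
      = ∑ i ∈ Finset.univ, max (hstar i - c j) 0 := by
    rw [List.map_map]
    exact Finset.sum_map_toList _ _
  rw [hmapsum, hsum] at key
  have hsub : ∑ i ∈ Dbar j, (hstar i - c j)
      = w (Dbar j) - (Dbar j).card * c j := by
    rw [Finset.sum_sub_distrib, hbind j hj.le, Finset.sum_const, nsmul_eq_mul]
  rw [hsub] at key
  have key' : topSumList (Finset.univ.toList.map hstar) ((Dbar j).card + m')
      ≤ w (Dbar j) + m' * c j := by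
    push_cast at key ⊢
    linarith
  -- the core inequalities
  have hb1 : w (Dbar j) ≤ ∑ i ∈ Dbar j, h i := hcore _
  have hsplit : ∑ i ∈ Dbar (j+1), h i = (∑ i ∈ Dbar j, h i) + ∑ i ∈ Dk j, h i := by
    rw [hsucc, Finset.sum_union hdj.symm]
  have hb2 : w (Dbar (j+1)) ≤ (∑ i ∈ Dbar j, h i) + ∑ i ∈ Dk j, h i := by
    rw [← hsplit]; exact hcore _
  have hcval : w (Dbar (j+1)) = w (Dbar j) + n * c j := by
    have hsum2 : ∑ i ∈ Dk j, hstar i = n * c j := by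
      rw [Finset.sum_congr rfl (fun i hi => hconst j hj i hi), Finset.sum_const,
        nsmul_eq_mul, hn_def]
    rw [← hbind (j+1) hj, ← hbind j hj.le, hsucc, Finset.sum_union hdj.symm, hsum2]
  have hnR : (0:ℝ) < n := by exact_mod_cast hn
  have hm'R : (m':ℝ) ≤ n := by exact_mod_cast hm'
  have hm'0 : (0:ℝ) ≤ m' := Nat.cast_nonneg _
  have final : w (Dbar j) + m' * c j
      ≤ (∑ i ∈ Dbar j, h i) + (m' : ℝ) * (∑ i ∈ Dk j, h i) / (n : ℝ) := by
    rw [← mul_le_mul_iff_right₀ hnR]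
    have hdiv : (n:ℝ) * ((∑ i ∈ Dbar j, h i) + (m' : ℝ) * (∑ i ∈ Dk j, h i) / (n : ℝ))
        = (n:ℝ) * (∑ i ∈ Dbar j, h i) + (m' : ℝ) * (∑ i ∈ Dk j, h i) := by
      field_simp
    rw [hdiv]
    have t1 : ((n:ℝ) - m') * w (Dbar j) ≤ ((n:ℝ) - m') * (∑ i ∈ Dbar j, h i) :=
      mul_le_mul_of_nonneg_left hb1 (by linarith)
    have t2 : (m':ℝ) * w (Dbar (j+1)) ≤ (m':ℝ) * ((∑ i ∈ Dbar j, h i) + ∑ i ∈ Dk j, h i) :=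
      mul_le_mul_of_nonneg_left hb2 hm'0
    rw [hcval] at t2
    nlinarith [t1, t2]
  exact key'.trans final
end
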